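/- arXiv:math/9307201 — 7 statements merged into one kernel-verified Lean document; each statement's English description precedes it below -/
import Mathlib

section
/- Let 1 belong to the approximate point spectrum of e^{2πA} on E. Then 0 belongs to the approximate point spectrum of the generator B of the periodic evolutionary semigroup on F. -/
open MeasureTheory Filter Topology
open scoped ENNReal

noncomputable section

instance : Fact (0 < 2 * Real.pi) := ⟨by positivity⟩

/-- `T` is a strongly continuous (C₀-) one-parameter semigroup of bounded
linear operators. -/
def IsC0Semigroup {X : Type*} [NormedAddCommGroup X] [NormedSpace ℂ X]
    (T : ℝ → X →L[ℂ] X) : Prop :=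
  T 0 = 1 ∧ (∀ s t : ℝ, 0 ≤ s → 0 ≤ t → T (s + t) = (T s).comp (T t)) ∧
    ∀ x : X, ContinuousOn (fun t => T t x) (Set.Ici (0 : ℝ))

/-- The (in general unbounded, densely defined) operator `A`, given as a
partially defined linear map, is the infinitesimal generator of the semigroup `T`:
its domain consists exactly of the vectors `x` for which the right derivative of
`t ↦ T t x` at `0` exists, and `A x` is this derivative. -/
def IsGenerator {X : Type*} [NormedAddCommGroup X] [NormedSpace ℂ X]
    (T : ℝ → X →L[ℂ] X) (A : X →ₗ.[ℂ] X) : Prop :=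
  ∀ x y : X,
    (∃ hx : x ∈ A.domain, A ⟨x, hx⟩ = y) ↔
      Tendsto (fun t : ℝ => (t : ℂ)⁻¹ • (T t x - x)) (𝓝[>] (0 : ℝ)) (𝓝 y)

/-- `R` is the (bounded, everywhere defined) resolvent operator `(A - z)⁻¹` of the
partially defined linear operator `A` at the point `z`. -/
def IsPResolvent {X : Type*} [NormedAddCommGroup X] [NormedSpace ℂ X]
    (A : X →ₗ.[ℂ] X) (z : ℂ) (R : X →L[ℂ] X) : Prop :=
  ∃ hR : ∀ x : X, R x ∈ A.domain,
    (∀ x : X, A ⟨R x, hR x⟩ - z • R x = x) ∧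
      ∀ x : A.domain, R (A x - z • (x : X)) = x

/-- The resolvent set of a partially defined linear operator. -/
def pResolventSet {X : Type*} [NormedAddCommGroup X] [NormedSpace ℂ X]
    (A : X →ₗ.[ℂ] X) : Set ℂ :=
  {z | ∃ R : X →L[ℂ] X, IsPResolvent A z R}

/-- The spectrum of a partially defined linear operator. -/
def pSpectrum {X : Type*} [NormedAddCommGroup X] [NormedSpace ℂ X]
    (A : X →ₗ.[ℂ] X) : Set ℂ :=
  (pResolventSet A)ᶜ

/-- The approximate point spectrum of a partially defined linear operator. -/
def pApproxSpectrum {X : Type*} [NormedAddCommGroup X] [NormedSpace ℂ X]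
    (A : X →ₗ.[ℂ] X) : Set ℂ :=
  {z | ∀ ε > (0 : ℝ), ∃ x : A.domain, ‖(x : X)‖ = 1 ∧ ‖A x - z • (x : X)‖ < ε}

/-- The approximate point spectrum of a bounded linear operator. -/
def approxSpectrum {X : Type*} [NormedAddCommGroup X] [NormedSpace ℂ X]
    (T : X →L[ℂ] X) : Set ℂ :=
  {z | ∀ ε > (0 : ℝ), ∃ x : X, ‖x‖ = 1 ∧ ‖T x - z • x‖ < ε}

/-- `U` is an evolutionary family (propagator): strong continuity, the algebraic
identities `U x s = U x r ∘ U r s`, `U x x = I`, and an exponential bound. -/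
def IsEvolutionFamily {X : Type*} [NormedAddCommGroup X] [NormedSpace ℂ X]
    (U : ℝ → ℝ → X →L[ℂ] X) : Prop :=
  (∀ v : X, ContinuousOn (fun q : ℝ × ℝ => U q.1 q.2 v) {q : ℝ × ℝ | q.2 ≤ q.1}) ∧
  (∀ x r s : ℝ, s ≤ r → r ≤ x → U x s = (U x r).comp (U r s)) ∧
  (∀ x : ℝ, U x x = 1) ∧
  ∃ C β : ℝ, 0 < C ∧ 0 < β ∧ ∀ x s : ℝ, s ≤ x → ‖U x s‖ ≤ C * Real.exp (β * (x - s))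


open scoped NNReal

/-- Right-sided Lebesgue differentiation / FTC for continuous functions. -/
lemma ftc_right {X : Type*} [NormedAddCommGroup X] [NormedSpace ℝ X] [CompleteSpace X]
    {u : ℝ → X} (hu : ContinuousOn u (Set.Ici 0)) {a : ℝ} (ha : 0 ≤ a) :
    Tendsto (fun t : ℝ => t⁻¹ • ∫ s in a..(a + t), u s) (𝓝[>] (0 : ℝ)) (𝓝 (u a)) := by
  rw [Metric.tendsto_nhdsWithin_nhds]
  intro ε εpos
  have hca : ContinuousWithinAt u (Set.Ici 0) a := hu a (Set.mem_Ici.2 ha)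
  rw [Metric.continuousWithinAt_iff] at hca
  obtain ⟨δ, δpos, hδ⟩ := hca (ε / 2) (by positivity)
  refine ⟨δ, δpos, ?_⟩
  intro t ht htd
  have ht0 : (0 : ℝ) < t := ht
  have htδ : t < δ := by
    rwa [Real.dist_eq, sub_zero, abs_of_pos ht0] at htd
  have hint : IntervalIntegrable u volume a (a + t) := by
    apply ContinuousOn.intervalIntegrable
    apply hu.mono
    rw [Set.uIcc_of_le (by linarith)]
    intro s hs
    exact le_trans ha hs.1
  have hbound : ∀ s ∈ Set.uIoc a (a + t), ‖u s - u a‖ ≤ ε / 2 := by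
    intro s hs
    rw [Set.uIoc_of_le (by linarith : a ≤ a + t)] at hs
    have h0s : (0 : ℝ) ≤ s := le_trans ha hs.1.le
    have : dist s a < δ := by
      rw [Real.dist_eq, abs_of_nonneg (by linarith [hs.1.le])]
      linarith [hs.2]
    have := hδ (Set.mem_Ici.2 h0s) this
    rw [dist_eq_norm] at this
    exact this.le
  have hkey : (∫ s in a..(a + t), u s) - t • u a = ∫ s in a..(a + t), (u s - u a) := by
    rw [intervalIntegral.integral_sub hint intervalIntegrable_const,
      intervalIntegral.integral_const, add_sub_cancel_left]
  have hnorm : ‖(∫ s in a..(a + t), u s) - t • u a‖ ≤ ε / 2 * t := by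
    rw [hkey]
    have := intervalIntegral.norm_integral_le_of_norm_le_const hbound
    rwa [add_sub_cancel_left, abs_of_pos ht0] at this
  rw [dist_eq_norm]
  have : t⁻¹ • (∫ s in a..(a + t), u s) - u a
      = t⁻¹ • ((∫ s in a..(a + t), u s) - t • u a) := by
    rw [smul_sub, smul_smul, inv_mul_cancel₀ ht0.ne', one_smul]
  rw [this, norm_smul, norm_inv, Real.norm_eq_abs, abs_of_pos ht0]
  calc t⁻¹ * ‖(∫ s in a..(a + t), u s) - t • u a‖ ≤ t⁻¹ * (ε / 2 * t) := by
        exact mul_le_mul_of_nonneg_left hnorm (by positivity)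
    _ = ε / 2 := by field_simp
    _ < ε := by linarith


/-- Abstract criterion: if there are almost-invariant vectors uniformly over `t ∈ [0,1]`,
then `0` is in the approximate point spectrum of the generator. -/
lemma zero_mem_pApproxSpectrum {X : Type*} [NormedAddCommGroup X] [NormedSpace ℂ X]
    [CompleteSpace X] (T : ℝ → X →L[ℂ] X) (hT : IsC0Semigroup T)
    (B : X →ₗ.[ℂ] X) (hB : IsGenerator T B)
    (H : ∀ ε > (0 : ℝ), ∃ f : X, 1 ≤ ‖f‖ ∧ ∀ t ∈ Set.Icc (0 : ℝ) 1, ‖T t f - f‖ ≤ ε) :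
    (0 : ℂ) ∈ pApproxSpectrum B := by
  intro ε εpos
  set δ : ℝ := min (ε / 4) (1 / 2) with hδdef
  have hδpos : 0 < δ := lt_min (by positivity) (by norm_num)
  have hδhalf : δ ≤ 1 / 2 := min_le_right _ _
  have hδε : δ ≤ ε / 4 := min_le_left _ _
  obtain ⟨f, hf1, hfb⟩ := H δ hδpos
  set u : ℝ → X := fun s => T s f with hu_def
  have hu : ContinuousOn u (Set.Ici 0) := hT.2.2 f
  have huc : ∀ c d : ℝ, 0 ≤ c → c ≤ d → IntervalIntegrable u volume c d := by
    intro c d hc hcd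
    apply ContinuousOn.intervalIntegrable
    apply hu.mono
    rw [Set.uIcc_of_le hcd]
    exact fun s hs => le_trans hc hs.1
  set g : X := ∫ s in (0:ℝ)..1, u s with hg_def
  -- `‖g - f‖ ≤ δ`
  have hgf : ‖g - f‖ ≤ δ := by
    have h1 : g - f = ∫ s in (0:ℝ)..1, (u s - f) := by
      rw [intervalIntegral.integral_sub (huc 0 1 le_rfl zero_le_one) intervalIntegrable_const,
        intervalIntegral.integral_const]
      norm_num [hg_def]
    rw [h1]
    have := intervalIntegral.norm_integral_le_of_norm_le_const
      (C := δ) (f := fun s => u s - f) (a := 0) (b := 1) ?_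
    · simpa using this
    · intro s hs
      rw [Set.uIoc_of_le zero_le_one] at hs
      exact hfb s ⟨hs.1.le, hs.2⟩
  -- the difference quotient of `g` converges to `u 1 - u 0`
  have hten : Tendsto (fun t : ℝ => (t : ℂ)⁻¹ • (T t g - g)) (𝓝[>] (0 : ℝ))
      (𝓝 (u 1 - u 0)) := by
    have h₁ : Tendsto (fun t : ℝ => t⁻¹ • ∫ s in (1:ℝ)..(1 + t), u s) (𝓝[>] (0 : ℝ))
        (𝓝 (u 1)) := ftc_right hu zero_le_one
    have h₂ : Tendsto (fun t : ℝ => t⁻¹ • ∫ s in (0:ℝ)..(0 + t), u s) (𝓝[>] (0 : ℝ))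
        (𝓝 (u 0)) := ftc_right hu le_rfl
    have h₃ := h₁.sub h₂
    apply h₃.congr'
    filter_upwards [Ioo_mem_nhdsGT_of_mem (Set.mem_Ico.2 ⟨le_rfl, zero_lt_one⟩)] with t htm
    obtain ⟨ht, ht1⟩ := htm
    have ht1' : t ≤ 1 := ht1.le
    have hTtg : T t g = ∫ s in (0:ℝ)..1, u (t + s) := by
      rw [hg_def, ← (T t).intervalIntegral_comp_comm (huc 0 1 le_rfl zero_le_one)]
      apply intervalIntegral.integral_congr
      intro s hs
      rw [Set.uIcc_of_le zero_le_one] at hs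
      have := hT.2.1 t s ht.le hs.1
      show T t (T s f) = T (t + s) f
      rw [this]; rfl
    have hshift : (∫ s in (0:ℝ)..1, u (t + s)) = ∫ s in t..(t + 1), u s := by
      simpa using intervalIntegral.integral_comp_add_left u t
    have hsplit1 : (∫ s in (0:ℝ)..t, u s) + (∫ s in t..(1:ℝ), u s) = ∫ s in (0:ℝ)..1, u s :=
      intervalIntegral.integral_add_adjacent_intervals
        (huc 0 t le_rfl ht.le) (huc t 1 ht.le ht1')
    have hsplit2 : (∫ s in t..(1:ℝ), u s) + (∫ s in (1:ℝ)..(1 + t), u s) = ∫ s in t..(t+1), u s := by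
      have := intervalIntegral.integral_add_adjacent_intervals
        (huc t 1 ht.le ht1') (huc 1 (1 + t) zero_le_one (by linarith))
      rw [add_comm t 1]; exact this
    have hdiff : T t g - g = (∫ s in (1:ℝ)..(1 + t), u s) - (∫ s in (0:ℝ)..t, u s) := by
      rw [hTtg, hshift, hg_def, ← hsplit1, ← hsplit2]
      abel
    have hsm : ((t : ℂ))⁻¹ • (T t g - g) = t⁻¹ • (T t g - g) := by
      rw [← Complex.ofReal_inv, Complex.coe_smul]
    rw [hsm, hdiff, smul_sub]
    norm_num
  -- conclude membership in the domain
  obtain ⟨hgdom, hBg⟩ := (hB g (u 1 - u 0)).2 hten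
  have hu10 : ‖u 1 - u 0‖ ≤ δ := by
    have h0 : u 0 = f := by
      show T 0 f = f
      rw [hT.1]; rfl
    have := hfb 1 ⟨zero_le_one, le_rfl⟩
    rw [h0]
    exact this
  have hgnorm : 1 - δ ≤ ‖g‖ := by
    have := norm_sub_norm_le f g
    have h2 : ‖f - g‖ = ‖g - f‖ := norm_sub_rev _ _
    linarith [hgf, hf1, this, h2]
  have hgpos : (0 : ℝ) < ‖g‖ := by linarith
  set c : ℂ := ((‖g‖ : ℝ) : ℂ)⁻¹ with hc_def
  refine ⟨c • (⟨g, hgdom⟩ : B.domain), ?_, ?_⟩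
  · show ‖c • g‖ = 1
    rw [norm_smul, hc_def, norm_inv, Complex.norm_real, Real.norm_eq_abs,
      abs_of_pos hgpos, inv_mul_cancel₀ hgpos.ne']
  · rw [LinearPMap.map_smul, hBg]
    have : ((0:ℂ) • ((c • (⟨g, hgdom⟩ : B.domain) : B.domain) : X)) = 0 := zero_smul _ _
    rw [this, sub_zero, norm_smul, hc_def, norm_inv, Complex.norm_real, Real.norm_eq_abs,
      abs_of_pos hgpos]
    have h1 : ‖g‖⁻¹ ≤ (1 - δ)⁻¹ := by
      apply inv_anti₀ (by linarith) hgnorm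
    have h2 : (1 - δ)⁻¹ ≤ 2 := by
      rw [inv_le_comm₀ (by linarith) (by norm_num)]
      linarith
    calc ‖g‖⁻¹ * ‖u 1 - u 0‖ ≤ 2 * δ := by
          apply mul_le_mul (le_trans h1 h2) hu10 (norm_nonneg _) (by norm_num)
      _ < ε := by linarith


lemma coe_equivIco_self (p : ℝ) [Fact (0 < p)] (θ : AddCircle p) :
    ((AddCircle.equivIco p 0 θ : ℝ) : AddCircle p) = θ := by
  change (AddCircle.equivIco p 0).symm (AddCircle.equivIco p 0 θ) = θ
  exact (AddCircle.equivIco p 0).symm_apply_apply θ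


/-- The construction of the near-eigenfunction on the circle. -/
lemma construction {E : Type*} [NormedAddCommGroup E] [NormedSpace ℂ E]
    (TA : ℝ → E →L[ℂ] E) (hTA : IsC0Semigroup TA) {M : ℝ} (hM : 1 ≤ M)
    (hMb : ∀ t ∈ Set.Icc (0 : ℝ) (2 * Real.pi), ‖TA t‖ ≤ M)
    {x : E} (hx : ‖x‖ = 1) {δ : ℝ} (hδ0 : 0 ≤ δ) (hδM : δ ≤ 1 / (4 * M))
    (hxδ : ‖TA (2 * Real.pi) x - x‖ ≤ δ) :
    ∃ γ : ℝ → E,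
      Continuous (AddCircle.liftIco (2 * Real.pi) 0 γ) ∧
      (AddCircle.liftIco (2 * Real.pi) 0 γ) 0 = x ∧
      (∀ θ : AddCircle (2 * Real.pi), 1 / (2 * M) ≤ ‖AddCircle.liftIco (2 * Real.pi) 0 γ θ‖) ∧
      (∀ t ∈ Set.Icc (0 : ℝ) (2 * Real.pi), ∀ θ : AddCircle (2 * Real.pi),
        ‖TA t (AddCircle.liftIco (2 * Real.pi) 0 γ (θ - ((t : ℝ) : AddCircle (2 * Real.pi)))) -
          AddCircle.liftIco (2 * Real.pi) 0 γ θ‖ ≤ 4 * M * δ) := by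
  have pi_pos := Real.pi_pos
  have h2π : (0:ℝ) < 2 * Real.pi := by positivity
  have hMpos : (0:ℝ) < M := by linarith
  set w : E := x - TA (2 * Real.pi) x with hw_def
  have hw : ‖w‖ ≤ δ := by rw [hw_def, norm_sub_rev]; exact hxδ
  set γ : ℝ → E := fun θ => TA θ x + (θ / (2 * Real.pi)) • w with hγ_def
  have hγ0 : γ 0 = x := by
    simp only [hγ_def]
    rw [hTA.1]
    norm_num
  have hγp : γ (2 * Real.pi) = x := by
    simp only [hγ_def]
    rw [div_self h2π.ne', one_smul, hw_def]
    abel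
  have hγcont : ContinuousOn γ (Set.Icc 0 (2 * Real.pi)) := by
    apply ContinuousOn.add
    · exact (hTA.2.2 x).mono (fun s hs => hs.1)
    · exact (continuousOn_id.div_const _).smul continuousOn_const
  -- lower bound for ‖γ θ‖ on [0, 2π)
  have hγlow : ∀ θ ∈ Set.Ico (0:ℝ) (2 * Real.pi), 1 / (2 * M) ≤ ‖γ θ‖ := by
    intro θ hθ
    have hθ2π : 2 * Real.pi - θ ∈ Set.Icc (0:ℝ) (2 * Real.pi) := by
      exact ⟨by linarith [hθ.2], by linarith [hθ.1]⟩
    have hsemi : TA (2 * Real.pi - θ) (TA θ x) = TA (2 * Real.pi) x := by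
      have := hTA.2.1 (2 * Real.pi - θ) θ (by linarith [hθ.2]) hθ.1
      rw [sub_add_cancel] at this
      rw [this]; rfl
    have h2πx : 1 - δ ≤ ‖TA (2 * Real.pi) x‖ := by
      have h := norm_sub_norm_le x (TA (2 * Real.pi) x)
      rw [hx, norm_sub_rev] at h
      linarith
    have hTAθ : (1 - δ) / M ≤ ‖TA θ x‖ := by
      have hb := (TA (2 * Real.pi - θ)).le_opNorm (TA θ x)
      have hM2 := hMb _ hθ2π
      have : ‖TA (2 * Real.pi) x‖ ≤ M * ‖TA θ x‖ := by
        rw [← hsemi]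
        calc ‖TA (2 * Real.pi - θ) (TA θ x)‖ ≤ ‖TA (2 * Real.pi - θ)‖ * ‖TA θ x‖ := hb
          _ ≤ M * ‖TA θ x‖ := by
              apply mul_le_mul_of_nonneg_right hM2 (norm_nonneg _)
      rw [div_le_iff₀ hMpos, mul_comm]
      linarith
    have hcoef : ‖(θ / (2 * Real.pi)) • w‖ ≤ δ := by
      rw [norm_smul, Real.norm_eq_abs, abs_of_nonneg (div_nonneg hθ.1 h2π.le)]
      have h1 : θ / (2 * Real.pi) ≤ 1 := by
        rw [div_le_one h2π]; exact hθ.2.le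
      calc θ / (2 * Real.pi) * ‖w‖ ≤ 1 * ‖w‖ :=
            mul_le_mul_of_nonneg_right h1 (norm_nonneg _)
        _ = ‖w‖ := one_mul _
        _ ≤ δ := hw
    have hγθ : ‖TA θ x‖ - δ ≤ ‖γ θ‖ := by
      have h3 : ‖TA θ x‖ ≤ ‖γ θ‖ + ‖(θ / (2 * Real.pi)) • w‖ := by
        have h4 : γ θ - (θ / (2 * Real.pi)) • w = TA θ x := by
          simp only [hγ_def]; abel
        calc ‖TA θ x‖ = ‖γ θ - (θ / (2 * Real.pi)) • w‖ := by rw [h4]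
          _ ≤ ‖γ θ‖ + ‖(θ / (2 * Real.pi)) • w‖ := norm_sub_le _ _
      linarith
    have hδM' : δ * (4 * M) ≤ 1 := (le_div_iff₀ (by positivity)).mp hδM
    have key : 1 / (2 * M) ≤ (1 - δ) / M - δ := by
      have e1 : (1 - δ) / M - δ - 1 / (2 * M) = (1 - 2*δ - 2*δ*M) / (2*M) := by
        field_simp; ring
      have e2 : (0:ℝ) ≤ (1 - 2*δ - 2*δ*M) / (2*M) := by
        apply div_nonneg _ (by positivity)
        nlinarith [hδM', hM, hδ0]
      linarith
    linarith
  refine ⟨γ, ?_, ?_, ?_, ?_⟩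
  · apply AddCircle.liftIco_continuous
    · rw [hγ0, zero_add, hγp]
    · rw [zero_add]; exact hγcont
  · have h0 : ((0:ℝ) : AddCircle (2 * Real.pi)) = 0 := by norm_num
    have hmem : (0:ℝ) ∈ Set.Ico (0:ℝ) (0 + 2 * Real.pi) := by
      constructor
      · exact le_refl 0
      · rw [zero_add]; exact h2π
    rw [← h0, AddCircle.liftIco_coe_apply hmem]
    exact hγ0
  · intro θ
    have hmem := (AddCircle.equivIco (2 * Real.pi) 0 θ).2
    have hmem' : ((AddCircle.equivIco (2 * Real.pi) 0 θ : ℝ)) ∈ Set.Ico (0:ℝ) (2 * Real.pi) :=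
      ⟨hmem.1, by have h := hmem.2; linarith⟩
    exact hγlow _ hmem' 
  · intro t ht θ
    set r : ℝ := (AddCircle.equivIco (2 * Real.pi) 0 θ : ℝ) with hr_def
    have hrmem0 := (AddCircle.equivIco (2 * Real.pi) 0 θ).2
    have hrmem : r ∈ Set.Ico (0:ℝ) (2 * Real.pi) :=
      ⟨hrmem0.1, by have h := hrmem0.2; linarith⟩
    have hθr : ((r : ℝ) : AddCircle (2 * Real.pi)) = θ := coe_equivIco_self _ θ
    have hfθ : AddCircle.liftIco (2 * Real.pi) 0 γ θ = γ r := by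
      rw [← hθr]
      exact AddCircle.liftIco_coe_apply (by rw [zero_add]; exact hrmem)
    have hsub : θ - ((t:ℝ) : AddCircle (2 * Real.pi)) = ((r - t : ℝ) : AddCircle (2 * Real.pi)) := by
      rw [← hθr]
      norm_cast
    have hTtw : ‖TA t w‖ ≤ M * δ := by
      calc ‖TA t w‖ ≤ ‖TA t‖ * ‖w‖ := (TA t).le_opNorm w
        _ ≤ M * δ := mul_le_mul (hMb t ht) hw (norm_nonneg _) (by linarith)
    have hTrw : ‖TA r w‖ ≤ M * δ := by
      calc ‖TA r w‖ ≤ ‖TA r‖ * ‖w‖ := (TA r).le_opNorm w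
        _ ≤ M * δ := mul_le_mul (hMb r ⟨hrmem.1, hrmem.2.le⟩) hw (norm_nonneg _) (by linarith)
    have hcoef : ∀ y : ℝ, 0 ≤ y → y < 2 * Real.pi → ∀ v : E,
        ‖(y / (2 * Real.pi)) • v‖ ≤ ‖v‖ := by
      intro y hy0 hy2 v
      rw [norm_smul, Real.norm_eq_abs, abs_of_nonneg (div_nonneg hy0 h2π.le)]
      have h1 : y / (2 * Real.pi) ≤ 1 := by rw [div_le_one h2π]; exact hy2.le
      calc y / (2 * Real.pi) * ‖v‖ ≤ 1 * ‖v‖ := mul_le_mul_of_nonneg_right h1 (norm_nonneg _)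
        _ = ‖v‖ := one_mul _
    rcases le_or_gt t r with hc | hc
    · -- no wrap-around
      have hmem2 : r - t ∈ Set.Ico (0:ℝ) (0 + 2 * Real.pi) := by
        constructor
        · linarith
        · rw [zero_add]; linarith [hrmem.2, ht.1]
      have hfθt : AddCircle.liftIco (2 * Real.pi) 0 γ (θ - ((t:ℝ) : AddCircle (2 * Real.pi)))
          = γ (r - t) := by
        rw [hsub]
        exact AddCircle.liftIco_coe_apply hmem2
      rw [hfθ, hfθt]
      have hsg : TA t (TA (r - t) x) = TA r x := by
        have h := hTA.2.1 t (r - t) ht.1 (by linarith)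
        rw [add_sub_cancel] at h
        rw [h]; rfl
      have hexp : TA t (γ (r - t)) - γ r
          = ((r - t) / (2 * Real.pi)) • TA t w - (r / (2 * Real.pi)) • w := by
        simp only [hγ_def]
        rw [map_add, (TA t).map_smul_of_tower, hsg]
        abel
      rw [hexp]
      calc ‖((r - t) / (2 * Real.pi)) • TA t w - (r / (2 * Real.pi)) • w‖
          ≤ ‖((r - t) / (2 * Real.pi)) • TA t w‖ + ‖(r / (2 * Real.pi)) • w‖ := norm_sub_le _ _
        _ ≤ ‖TA t w‖ + ‖w‖ := by
            gcongr ?_ + ?_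
            · exact hcoef _ (by linarith) (by linarith [hrmem.2, ht.1]) _
            · exact hcoef _ hrmem.1 hrmem.2 _
        _ ≤ M * δ + δ := by gcongr
        _ ≤ 4 * M * δ := by nlinarith [hδ0, hM]
    · -- wrap-around
      set s : ℝ := r - t + 2 * Real.pi with hs_def
      have hs0 : 0 ≤ s := by simp only [hs_def]; linarith [ht.2, hrmem.1]
      have hs2 : s < 2 * Real.pi := by simp only [hs_def]; linarith
      have hmem2 : s ∈ Set.Ico (0:ℝ) (0 + 2 * Real.pi) := ⟨hs0, by rw [zero_add]; exact hs2⟩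
      have hcoes : ((r - t : ℝ) : AddCircle (2 * Real.pi)) = ((s : ℝ) : AddCircle (2 * Real.pi)) := by
        rw [hs_def]
        exact (AddCircle.coe_add_period (2 * Real.pi) (r - t)).symm
      have hfθt : AddCircle.liftIco (2 * Real.pi) 0 γ (θ - ((t:ℝ) : AddCircle (2 * Real.pi)))
          = γ s := by
        rw [hsub, hcoes]
        exact AddCircle.liftIco_coe_apply hmem2
      rw [hfθ, hfθt]
      have hsg : TA t (TA s x) = TA r (TA (2 * Real.pi) x) := by
        have h1 := hTA.2.1 t s ht.1 hs0
        have h2 := hTA.2.1 r (2 * Real.pi) hrmem.1 h2π.le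
        have hts : t + s = r + 2 * Real.pi := by simp only [hs_def]; ring
        rw [hts] at h1
        calc TA t (TA s x) = TA (r + 2 * Real.pi) x := by rw [h1]; rfl
          _ = TA r (TA (2 * Real.pi) x) := by rw [h2]; rfl
      have hTA2π : TA (2 * Real.pi) x = x - w := by rw [hw_def]; abel
      have hexp : TA t (γ s) - γ r
          = (s / (2 * Real.pi)) • TA t w - TA r w - (r / (2 * Real.pi)) • w := by
        simp only [hγ_def]
        rw [map_add, (TA t).map_smul_of_tower, hsg, hTA2π, map_sub]
        abel
      rw [hexp]
      calc ‖(s / (2 * Real.pi)) • TA t w - TA r w - (r / (2 * Real.pi)) • w‖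
          ≤ ‖(s / (2 * Real.pi)) • TA t w - TA r w‖ + ‖(r / (2 * Real.pi)) • w‖ := norm_sub_le _ _
        _ ≤ ‖(s / (2 * Real.pi)) • TA t w‖ + ‖TA r w‖ + ‖(r / (2 * Real.pi)) • w‖ := by
            gcongr ?_ + _
            exact norm_sub_le _ _
        _ ≤ ‖TA t w‖ + ‖TA r w‖ + ‖w‖ := by
            gcongr ?_ + _ + ?_
            · exact hcoef _ hs0 hs2 _
            · exact hcoef _ hrmem.1 hrmem.2 _
        _ ≤ M * δ + (M * δ + δ) := by
            have := hTtw
            have := hTrw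
            linarith
        _ ≤ 4 * M * δ := by nlinarith [hδ0, hM]


/-- Uniform bound on compact time intervals, via Banach–Steinhaus. -/
lemma uniform_bound {E : Type*} [NormedAddCommGroup E] [NormedSpace ℂ E] [CompleteSpace E]
    (TA : ℝ → E →L[ℂ] E) (hTA : IsC0Semigroup TA) (b : ℝ) :
    ∃ M : ℝ, 1 ≤ M ∧ ∀ t ∈ Set.Icc (0 : ℝ) b, ‖TA t‖ ≤ M := by
  have h : ∀ x : E, ∃ C : ℝ, ∀ i : Set.Icc (0:ℝ) b, ‖TA i x‖ ≤ C := by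
    intro x
    obtain ⟨C, hC⟩ := (isCompact_Icc (a := (0:ℝ)) (b := b)).exists_bound_of_continuousOn
      ((hTA.2.2 x).mono (fun s hs => hs.1))
    exact ⟨C, fun i => hC i i.2⟩
  obtain ⟨C', hC'⟩ := banach_steinhaus (g := fun i : Set.Icc (0:ℝ) b => TA i) h
  refine ⟨max C' 1, le_max_right _ _, fun t ht => ?_⟩
  exact le_trans (hC' ⟨t, ht⟩) (le_max_left _ _)


/-- choice of `δ` given `ε` -/
lemma delta_choice {M ε : ℝ} (hM : 1 ≤ M) (εpos : 0 < ε) :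
    ∃ δ : ℝ, 0 < δ ∧ δ ≤ 1 / (4 * M) ∧ 60 * M * M * δ ≤ ε := by
  have hMpos : (0:ℝ) < M := by linarith
  refine ⟨min (ε / (60 * M * M)) (1 / (4 * M)), lt_min (by positivity) (by positivity),
    min_le_right _ _, ?_⟩
  have h := min_le_left (ε / (60 * M * M)) (1 / (4 * M))
  calc 60 * M * M * min (ε / (60 * M * M)) (1 / (4 * M)) ≤ 60 * M * M * (ε / (60 * M * M)) := by
        apply mul_le_mul_of_nonneg_left h (by positivity)
    _ = ε := by field_simp


lemma c_case {E : Type*} [NormedAddCommGroup E] [NormedSpace ℂ E] [CompleteSpace E]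
    (TA : ℝ → E →L[ℂ] E) (hTA : IsC0Semigroup TA)
    (h1 : (1 : ℂ) ∈ approxSpectrum (TA (2 * Real.pi)))
    (TB : ℝ → C(AddCircle (2 * Real.pi), E) →L[ℂ] C(AddCircle (2 * Real.pi), E))
    (hTB : IsC0Semigroup TB)
    (hpt : ∀ t : ℝ, 0 ≤ t → ∀ f : C(AddCircle (2 * Real.pi), E),
      ∀ x : AddCircle (2 * Real.pi),
        (TB t f) x = TA t (f (x - (t : AddCircle (2 * Real.pi)))))
    (B : C(AddCircle (2 * Real.pi), E) →ₗ.[ℂ] C(AddCircle (2 * Real.pi), E))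
    (hB : IsGenerator TB B) : (0 : ℂ) ∈ pApproxSpectrum B := by
  obtain ⟨M, hM, hMb⟩ := uniform_bound TA hTA (2 * Real.pi)
  apply zero_mem_pApproxSpectrum TB hTB B hB
  intro ε εpos
  obtain ⟨δ, δpos, δle, δε⟩ := delta_choice hM εpos
  obtain ⟨x, hx, hxδ⟩ := h1 δ δpos
  rw [one_smul] at hxδ
  obtain ⟨γ, hcont, h0, _hlow, hest⟩ :=
    construction TA hTA hM hMb hx δpos.le δle hxδ.le
  set f : C(AddCircle (2 * Real.pi), E) := ⟨AddCircle.liftIco (2 * Real.pi) 0 γ, hcont⟩ with hf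
  have hMpos : (0:ℝ) < M := by linarith
  refine ⟨f, ?_, ?_⟩
  · calc (1:ℝ) = ‖f 0‖ := by
          have : f 0 = x := h0
          rw [this, hx]
      _ ≤ ‖f‖ := f.norm_coe_le_norm 0
  · intro t ht
    have ht2π : t ∈ Set.Icc (0:ℝ) (2 * Real.pi) :=
      ⟨ht.1, le_trans ht.2 (by nlinarith [Real.pi_gt_three])⟩
    have h4M : 4 * M * δ ≤ ε := by
      have hMδ : (0:ℝ) ≤ M * δ := by positivity
      have h60 : 4 * M * δ ≤ 60 * M * M * δ := by
        calc 4 * M * δ = 4 * (M * δ) := by ring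
          _ ≤ (60 * M) * (M * δ) := mul_le_mul_of_nonneg_right (by linarith) hMδ
          _ = 60 * M * M * δ := by ring
      linarith
    apply le_trans _ h4M
    apply (ContinuousMap.norm_le _ (by positivity)).2
    intro θ
    rw [ContinuousMap.sub_apply, hpt t ht.1 f θ]
    exact hest t ht2π θ


set_option maxHeartbeats 1600000 in
lemma lp_case {E : Type*} [NormedAddCommGroup E] [NormedSpace ℂ E] [CompleteSpace E]
    (TA : ℝ → E →L[ℂ] E) (hTA : IsC0Semigroup TA)
    (h1 : (1 : ℂ) ∈ approxSpectrum (TA (2 * Real.pi)))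
    (p : ℝ≥0∞) [Fact (1 ≤ p)] (hp : p ≠ ∞)
    (TB : ℝ → Lp E p (volume : Measure (AddCircle (2 * Real.pi))) →L[ℂ]
      Lp E p (volume : Measure (AddCircle (2 * Real.pi))))
    (hTB : IsC0Semigroup TB)
    (hpt : ∀ t : ℝ, 0 ≤ t → ∀ f : Lp E p (volume : Measure (AddCircle (2 * Real.pi))),
      ∀ᵐ x ∂(volume : Measure (AddCircle (2 * Real.pi))),
        (TB t f) x = TA t (f (x - (t : AddCircle (2 * Real.pi)))))
    (B : Lp E p (volume : Measure (AddCircle (2 * Real.pi))) →ₗ.[ℂ]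
      Lp E p (volume : Measure (AddCircle (2 * Real.pi))))
    (hB : IsGenerator TB B) : (0 : ℂ) ∈ pApproxSpectrum B := by
  have pi_pos := Real.pi_pos
  have pi_gt := Real.pi_gt_three
  obtain ⟨M, hM, hMb⟩ := uniform_bound TA hTA (2 * Real.pi)
  have hMpos : (0:ℝ) < M := by linarith
  apply zero_mem_pApproxSpectrum TB hTB B hB
  intro ε εpos
  obtain ⟨δ, δpos, δle, δε⟩ := delta_choice hM εpos
  obtain ⟨x, hx, hxδ⟩ := h1 δ δpos
  rw [one_smul] at hxδ
  obtain ⟨γ, hcont, h0, hlow, hest⟩ := construction TA hTA hM hMb hx δpos.le δle hxδ.le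
  set fC : C(AddCircle (2 * Real.pi), E) := ⟨AddCircle.liftIco (2 * Real.pi) 0 γ, hcont⟩
    with hfC
  set F : Lp E p (volume : Measure (AddCircle (2 * Real.pi))) :=
    ContinuousMap.toLp p volume ℂ fC with hF
  have hFcoe : (F : AddCircle (2 * Real.pi) → E) =ᵐ[volume] fC :=
    ContinuousMap.coeFn_toLp volume fC
  -- exponent facts
  have hp0 : p ≠ 0 := by
    intro h
    have := (Fact.out : (1:ℝ≥0∞) ≤ p)
    rw [h] at this
    exact (not_le.2 zero_lt_one) (by exact_mod_cast this)
  have hptR : 1 ≤ p.toReal := by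
    have := ENNReal.toReal_mono hp (Fact.out : (1:ℝ≥0∞) ≤ p)
    simpa using this
  have hptRpos : 0 < p.toReal := by linarith
  -- lower bound on ‖F‖
  have hlowF : 1 / (2 * M) ≤ ‖F‖ := by
    set c : E := (1 / (2 * M)) • x with hc
    have hcnorm : ‖c‖ = 1 / (2 * M) := by
      rw [hc, norm_smul, Real.norm_eq_abs, abs_of_pos (by positivity), hx, mul_one]
    have hmono : eLpNorm (fun _ : AddCircle (2 * Real.pi) => c) p volume
        ≤ eLpNorm (F : AddCircle (2 * Real.pi) → E) p volume := by
      apply eLpNorm_mono_ae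
      filter_upwards [hFcoe] with θ hθ
      rw [hθ, hcnorm]
      exact hlow θ
    have hconst : eLpNorm (fun _ : AddCircle (2 * Real.pi) => c) p volume
        = ‖c‖₊ * (volume (Set.univ : Set (AddCircle (2 * Real.pi)))) ^ (1 / p.toReal) :=
      eLpNorm_const c hp0 (NeZero.ne _)
    have hvol : (volume (Set.univ : Set (AddCircle (2 * Real.pi)))) = ENNReal.ofReal (2 * Real.pi) :=
      AddCircle.measure_univ _
    have hone : (1 : ℝ≥0∞) ≤ (ENNReal.ofReal (2 * Real.pi)) ^ (1 / p.toReal) := by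
      apply ENNReal.one_le_rpow _ (by positivity)
      rw [ENNReal.one_le_ofReal]
      linarith
    have hchain : (‖c‖₊ : ℝ≥0∞) ≤ eLpNorm (F : AddCircle (2 * Real.pi) → E) p volume := by
      calc (‖c‖₊ : ℝ≥0∞) = ‖c‖₊ * 1 := (mul_one _).symm
        _ ≤ ‖c‖₊ * (ENNReal.ofReal (2 * Real.pi)) ^ (1 / p.toReal) := by gcongr
        _ = eLpNorm (fun _ : AddCircle (2 * Real.pi) => c) p volume := by rw [hconst, hvol]
        _ ≤ _ := hmono
    have := ENNReal.toReal_mono (Lp.eLpNorm_ne_top F) hchain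
    rw [ENNReal.coe_toReal, coe_nnnorm, hcnorm] at this
    rw [Lp.norm_def]
    exact this
  set G : Lp E p (volume : Measure (AddCircle (2 * Real.pi))) :=
    ((2 * M : ℝ) : ℂ) • F with hG
  have hGnorm1 : 1 ≤ ‖G‖ := by
    rw [hG, norm_smul, Complex.norm_real, Real.norm_eq_abs, abs_of_pos (by positivity)]
    calc (1:ℝ) = (2 * M) * (1 / (2 * M)) := by field_simp
      _ ≤ (2 * M) * ‖F‖ := by
          apply mul_le_mul_of_nonneg_left hlowF (by positivity)
  refine ⟨G, hGnorm1, ?_⟩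
  intro t ht
  have ht2π : t ∈ Set.Icc (0:ℝ) (2 * Real.pi) := ⟨ht.1, le_trans ht.2 (by nlinarith)⟩
  -- a.e. pointwise bound on TB t F - F
  have hshift : (fun θ : AddCircle (2 * Real.pi) => (F : AddCircle (2 * Real.pi) → E)
      (θ - (t : AddCircle (2 * Real.pi))))
      =ᵐ[volume] (fun θ => fC (θ - (t : AddCircle (2 * Real.pi)))) := by
    have hqmp := (measurePreserving_sub_right
      (volume : Measure (AddCircle (2 * Real.pi))) (t : AddCircle (2 * Real.pi))).quasiMeasurePreserving
    exact hqmp.ae_eq_comp hFcoe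
  have haeb : ∀ᵐ θ ∂(volume : Measure (AddCircle (2 * Real.pi))),
      ‖(TB t F - F : Lp E p volume) θ‖ ≤ 4 * M * δ := by
    filter_upwards [Lp.coeFn_sub (TB t F) F, hpt t ht.1 F, hFcoe, hshift]
      with θ h₁ h₂ h₃ h₄
    rw [h₁, Pi.sub_apply, h₂, h₃, h₄]
    exact hest t ht2π θ
  have hbound := Lp.norm_le_of_ae_bound (by positivity : (0:ℝ) ≤ 4 * M * δ) haeb
  -- measure factor bound
  have hfac : ((measureUnivNNReal (volume : Measure (AddCircle (2 * Real.pi))) : ℝ≥0)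
      ^ p.toReal⁻¹ : ℝ≥0) ≤ (7 : ℝ≥0) := by
    have hval : (measureUnivNNReal (volume : Measure (AddCircle (2 * Real.pi))) : ℝ) ≤ 7 := by
      have h1 : (measureUnivNNReal (volume : Measure (AddCircle (2 * Real.pi))) : ℝ)
          = (volume (Set.univ : Set (AddCircle (2 * Real.pi)))).toReal := rfl
      rw [h1, AddCircle.measure_univ _, ENNReal.toReal_ofReal (by positivity)]
      nlinarith [Real.pi_lt_d2]
    have h7 : measureUnivNNReal (volume : Measure (AddCircle (2 * Real.pi))) ≤ (7 : ℝ≥0) := by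
      exact_mod_cast hval
    calc measureUnivNNReal (volume : Measure (AddCircle (2 * Real.pi))) ^ p.toReal⁻¹
        ≤ (7 : ℝ≥0) ^ p.toReal⁻¹ := NNReal.rpow_le_rpow h7 (by positivity)
      _ ≤ (7 : ℝ≥0) ^ (1:ℝ) := by
          apply NNReal.rpow_le_rpow_of_exponent_le (by norm_num)
          rw [inv_le_one_iff₀]; right; exact hptR
      _ = 7 := NNReal.rpow_one _
  have hTBF : ‖TB t F - F‖ ≤ 7 * (4 * M * δ) := by
    calc ‖TB t F - F‖ ≤ (measureUnivNNReal (volume : Measure (AddCircle (2 * Real.pi)))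
          ^ p.toReal⁻¹ : ℝ≥0) * (4 * M * δ) := hbound
      _ ≤ 7 * (4 * M * δ) := by
          apply mul_le_mul_of_nonneg_right _ (by positivity)
          exact_mod_cast hfac
  have hsm : TB t G - G = ((2 * M : ℝ) : ℂ) • (TB t F - F) := by
    rw [hG, smul_sub, (TB t).map_smul]
  rw [hsm, norm_smul, Complex.norm_real, Real.norm_eq_abs, abs_of_pos (by positivity)]
  calc (2 * M) * ‖TB t F - F‖ ≤ (2 * M) * (7 * (4 * M * δ)) := by
        apply mul_le_mul_of_nonneg_left hTBF (by positivity)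
    _ = 56 * M * M * δ := by ring
    _ ≤ 60 * M * M * δ := by
        have h0 : (0:ℝ) ≤ M * M * δ := by positivity
        linarith
    _ ≤ ε := δε

/-- If `1` belongs to the approximate point spectrum of `e^{2πA}` on `E`,
then `0` belongs to the approximate point spectrum of the generator `B` of the periodic
evolutionary semigroup `(e^{tB} f)(x) = e^{tA} f(x - t)` on
`F = L_p([0,2π];E)` (periodic, i.e. `L_p` of the circle of circumference `2π`),
`1 ≤ p < ∞`, or `F = C([0,2π];E)` (periodic, i.e. continuous functions on that circle). -/
theorem statement0
    {E : Type*} [NormedAddCommGroup E] [NormedSpace ℂ E] [CompleteSpace E]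
    (TA : ℝ → E →L[ℂ] E) (hTA : IsC0Semigroup TA)
    (h1 : (1 : ℂ) ∈ approxSpectrum (TA (2 * Real.pi))) :
    (∀ (p : ℝ≥0∞) [Fact (1 ≤ p)], p ≠ ∞ →
      ∀ TB : ℝ → Lp E p (volume : Measure (AddCircle (2 * Real.pi))) →L[ℂ]
        Lp E p (volume : Measure (AddCircle (2 * Real.pi))),
        IsC0Semigroup TB →
        (∀ t : ℝ, 0 ≤ t → ∀ f : Lp E p (volume : Measure (AddCircle (2 * Real.pi))),
          ∀ᵐ x ∂(volume : Measure (AddCircle (2 * Real.pi))),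
            (TB t f) x = TA t (f (x - (t : AddCircle (2 * Real.pi))))) →
        ∀ B : Lp E p (volume : Measure (AddCircle (2 * Real.pi))) →ₗ.[ℂ]
          Lp E p (volume : Measure (AddCircle (2 * Real.pi))),
          IsGenerator TB B → (0 : ℂ) ∈ pApproxSpectrum B) ∧
    (∀ TB : ℝ → C(AddCircle (2 * Real.pi), E) →L[ℂ] C(AddCircle (2 * Real.pi), E),
        IsC0Semigroup TB →
        (∀ t : ℝ, 0 ≤ t → ∀ f : C(AddCircle (2 * Real.pi), E),
          ∀ x : AddCircle (2 * Real.pi),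
            (TB t f) x = TA t (f (x - (t : AddCircle (2 * Real.pi))))) →
        ∀ B : C(AddCircle (2 * Real.pi), E) →ₗ.[ℂ] C(AddCircle (2 * Real.pi), E),
          IsGenerator TB B → (0 : ℂ) ∈ pApproxSpectrum B) := by
  constructor
  · intro p _ hp TB hTB hpt B hB
    exact lp_case TA hTA h1 p hp TB hTB hpt B hB
  · intro TB hTB hpt B hB
    exact c_case TA hTA h1 TB hTB hpt B hB
end
end

section
/- Let a be a bounded linear operator on E. The following are equivalent: (1) σ(a) ∩ 𝕋 = ∅ in E; (2) σ(D_a S) ∩ 𝕋 = ∅ in F_s. -/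
open MeasureTheory Filter Topology
open scoped ENNReal

noncomputable section

open scoped ZeroAtInfty
set_option maxHeartbeats 1000000
set_option synthInstance.maxHeartbeats 400000
set_option linter.unusedSectionVars false


lemma spec_empty_of_subsingleton {A : Type*} [Ring A] [Algebra ℂ A] [Subsingleton A] (x : A) :
    spectrum ℂ x = ∅ := by
  ext z
  simp [spectrum.mem_iff, isUnit_of_subsingleton]

section Key

variable {E : Type*} [NormedAddCommGroup E] [NormedSpace ℂ E] [CompleteSpace E]
variable {F : Type*} [NormedAddCommGroup F] [NormedSpace ℂ F] [CompleteSpace F] [Nontrivial F]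

set_option synthInstance.maxHeartbeats 400000 in
lemma key (a : E →L[ℂ] E) (W Da S Si : F →L[ℂ] F)
    (hW : W = Da * S) (hcomm : Da * S = S * Da)
    (h1 : S * Si = 1) (h2 : Si * S = 1)
    (hS : ‖S‖ ≤ 1) (hSi : ‖Si‖ ≤ 1)
    (hspec : spectrum ℂ Da = spectrum ℂ a) :
    (spectrum ℂ a ∩ Metric.sphere (0 : ℂ) 1 = ∅ ↔
      spectrum ℂ W ∩ Metric.sphere (0 : ℂ) 1 = ∅) := by
  classical
  -- commutation of Da and Si
  have hDaSi : Da * Si = Si * Da := by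
    calc Da * Si = Si * S * (Da * Si) := by rw [h2, one_mul]
      _ = Si * (S * Da) * Si := by simp only [mul_assoc]
      _ = Si * (Da * S) * Si := by rw [hcomm]
      _ = Si * Da * (S * Si) := by simp only [mul_assoc]
      _ = Si * Da := by rw [h1, mul_one]
  set s : Set (F →L[ℂ] F) := {Da, S, Si} with hs
  have pair : ∀ x ∈ s, ∀ y ∈ s, x * y = y * x := by
    rintro x (rfl | rfl | rfl) y (rfl | rfl | rfl) <;>
      first
        | rfl
        | exact hcomm
        | exact hcomm.symm
        | exact hDaSi
        | exact hDaSi.symm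
        | exact h1.trans h2.symm
        | exact h2.trans h1.symm
  set C : Subalgebra ℂ (F →L[ℂ] F) := Subalgebra.centralizer ℂ s with hC
  set M : Subalgebra ℂ (F →L[ℂ] F) := Subalgebra.centralizer ℂ (C : Set (F →L[ℂ] F)) with hM
  have hsC : s ⊆ (C : Set (F →L[ℂ] F)) := fun x hx =>
    (Subalgebra.mem_centralizer_iff ℂ).mpr fun g hg => pair g hg x hx
  have hMC : M ≤ C := Subalgebra.centralizer_le ℂ s (C : Set (F →L[ℂ] F)) hsC
  have hmem : ∀ x ∈ s, x ∈ M := fun x hx =>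
    (Subalgebra.mem_centralizer_iff ℂ).mpr fun g hg =>
      ((Subalgebra.mem_centralizer_iff ℂ).mp hg x hx).symm
  have hMcomm : ∀ x y : M, x * y = y * x := fun x y =>
    Subtype.ext ((Subalgebra.mem_centralizer_iff ℂ).mp y.2 x.1 (hMC x.2))
  have hclosed : IsClosed (M : Set (F →L[ℂ] F)) := by
    have : (M : Set (F →L[ℂ] F)) = ⋂ c ∈ (C : Set (F →L[ℂ] F)), {x | c * x = x * c} := by
      ext x
      simp only [SetLike.mem_coe, Subalgebra.mem_centralizer_iff, Set.mem_iInter,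
        Set.mem_setOf_eq, hM]
    rw [this]
    exact isClosed_biInter fun c _ => isClosed_eq (continuous_const.mul continuous_id)
      (continuous_id.mul continuous_const)
  letI : CompleteSpace M := hclosed.completeSpace_coe
  letI : NormedCommRing M := { (inferInstance : NormedRing M) with mul_comm := hMcomm }
  letI : NormedAlgebra ℂ M :=
    { (inferInstance : Algebra ℂ M) with
      norm_smul_le := fun r x => norm_smul_le r (x : F →L[ℂ] F) }
  letI : NormOneClass M := ⟨show ‖((1 : M) : F →L[ℂ] F)‖ = 1 by rw [Subalgebra.coe_one]; exact norm_one⟩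
  have hUnitM : ∀ x : M, IsUnit (x : F →L[ℂ] F) → IsUnit x := by
    rintro x ⟨u, hu⟩
    have hxc : ∀ c ∈ (C : Set (F →L[ℂ] F)), c * (u : F →L[ℂ] F) = (u : F →L[ℂ] F) * c := by
      intro c hc
      have := (Subalgebra.mem_centralizer_iff ℂ).mp x.2 c hc
      rw [hu]; exact this
    have hinv : ((↑u⁻¹ : F →L[ℂ] F)) ∈ M := by
      apply (Subalgebra.mem_centralizer_iff ℂ).mpr
      intro c hc
      have h := hxc c hc
      calc c * (↑u⁻¹ : F →L[ℂ] F) = ↑u⁻¹ * ↑u * c * ↑u⁻¹ := by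
            rw [Units.inv_mul, one_mul]
        _ = ↑u⁻¹ * (↑u * c) * ↑u⁻¹ := by rw [mul_assoc (↑u⁻¹ : F →L[ℂ] F) ↑u c]
        _ = ↑u⁻¹ * (c * ↑u) * ↑u⁻¹ := by rw [h]
        _ = ↑u⁻¹ * c * (↑u * ↑u⁻¹) := by simp only [mul_assoc]
        _ = ↑u⁻¹ * c := by rw [Units.mul_inv, mul_one]
    exact ⟨⟨x, ⟨↑u⁻¹, hinv⟩,
      Subtype.ext (by simp only [Subalgebra.coe_mul, Subalgebra.coe_one]; rw [← hu]; exact u.mul_inv),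
      Subtype.ext (by simp only [Subalgebra.coe_mul, Subalgebra.coe_one]; rw [← hu]; exact u.inv_mul)⟩,
      rfl⟩
  have hspecM : ∀ x : M, spectrum ℂ (x : F →L[ℂ] F) = spectrum ℂ x := by
    intro x
    refine Set.Subset.antisymm (spectrum.subset_subalgebra x) ?_
    intro z hz
    by_contra hne
    rw [spectrum.notMem_iff] at hne
    have : IsUnit (algebraMap ℂ M z - x) := by
      apply hUnitM
      have : ((algebraMap ℂ M z - x : M) : F →L[ℂ] F) = algebraMap ℂ (F →L[ℂ] F) z - ↑x := by
        push_cast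
        rfl
      rw [this]
      exact hne
    exact (spectrum.mem_iff.mp hz) this
  have hchar : ∀ x : M, spectrum ℂ x =
      Set.range fun φ : WeakDual.characterSpace ℂ M => φ x := by
    intro x
    ext z
    rw [WeakDual.CharacterSpace.mem_spectrum_iff_exists]
    simp [Set.mem_range]
  -- bundled elements of M
  have hDaM : Da ∈ M := hmem Da (by simp [hs])
  have hSM : S ∈ M := hmem S (by simp [hs])
  have hSiM : Si ∈ M := hmem Si (by simp [hs])
  have hWM : W ∈ M := by rw [hW]; exact mul_mem hDaM hSM
  set mDa : M := ⟨Da, hDaM⟩ with hmDa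
  set mS : M := ⟨S, hSM⟩ with hmS
  set mSi : M := ⟨Si, hSiM⟩ with hmSi
  set mW : M := ⟨W, hWM⟩ with hmW
  have hnormS : ‖mS‖ = ‖S‖ := rfl
  have hnormSi : ‖mSi‖ = ‖Si‖ := rfl
  have hφS : ∀ φ : WeakDual.characterSpace ℂ M, ‖φ mS‖ = 1 := by
    intro φ
    have hprod : φ mS * φ mSi = 1 := by
      rw [← map_mul]
      have hSSi : mS * mSi = 1 := Subtype.ext
        (by simp only [Subalgebra.coe_mul, Subalgebra.coe_one]; exact h1)
      rw [hSSi, map_one]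
    have hb1 : ‖φ mS‖ ≤ 1 :=
      (spectrum.norm_le_norm_of_mem (AlgHom.apply_mem_spectrum φ mS)).trans
        (by exact hnormS.le.trans hS)
    have hb2 : ‖φ mSi‖ ≤ 1 :=
      (spectrum.norm_le_norm_of_mem (AlgHom.apply_mem_spectrum φ mSi)).trans
        (by exact hnormSi.le.trans hSi)
    have hmul : ‖φ mS‖ * ‖φ mSi‖ = 1 := by
      rw [← norm_mul, hprod, norm_one]
    nlinarith [norm_nonneg (φ mS), norm_nonneg (φ mSi)]
  have hφW : ∀ φ : WeakDual.characterSpace ℂ M, φ mW = φ mDa * φ mS := by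
    intro φ
    have : mW = mDa * mS := Subtype.ext
      (by simp only [Subalgebra.coe_mul]; exact hW)
    rw [this, map_mul]
  have hrange_a : spectrum ℂ a =
      Set.range fun φ : WeakDual.characterSpace ℂ M => φ mDa := by
    rw [← hspec, show Da = (mDa : F →L[ℂ] F) from rfl, hspecM mDa, hchar mDa]
  have hrange_W : spectrum ℂ W =
      Set.range fun φ : WeakDual.characterSpace ℂ M => φ mW := by
    rw [show W = (mW : F →L[ℂ] F) from rfl, hspecM mW, hchar mW]
  constructor
  · intro h
    rw [Set.eq_empty_iff_forall_notMem] at h ⊢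
    rintro z ⟨hz1, hz2⟩
    rw [hrange_W] at hz1
    obtain ⟨φ, hφ⟩ := hz1
    have hφ' : φ mW = z := hφ
    refine h (φ mDa) ⟨?_, ?_⟩
    · rw [hrange_a]; exact ⟨φ, rfl⟩
    · rw [mem_sphere_zero_iff_norm] at hz2 ⊢
      have : ‖z‖ = ‖φ mDa‖ * ‖φ mS‖ := by rw [← hφ', hφW φ, norm_mul]
      rw [hz2, hφS φ, mul_one] at this
      exact this.symm
  · intro h
    rw [Set.eq_empty_iff_forall_notMem] at h ⊢
    rintro z ⟨hz1, hz2⟩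
    rw [hrange_a] at hz1
    obtain ⟨φ, hφ⟩ := hz1
    have hφ' : φ mDa = z := hφ
    refine h (φ mW) ⟨?_, ?_⟩
    · rw [hrange_W]; exact ⟨φ, rfl⟩
    · rw [mem_sphere_zero_iff_norm] at hz2 ⊢
      rw [hφW φ, norm_mul, hφS φ, mul_one, hφ', hz2]

end Key


section lpOps

variable {E : Type*} [NormedAddCommGroup E] [NormedSpace ℂ E]
variable (p : ℝ≥0∞) [Fact (1 ≤ p)]

lemma hq_pos (hp : p ≠ ∞) : 0 < p.toReal :=
  ENNReal.toReal_pos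
    (by
      have h : (1 : ℝ≥0∞) ≤ p := Fact.out
      exact (lt_of_lt_of_le zero_lt_one h).ne') hp

lemma memℓp_shift (hp : p ≠ ∞) (v : lp (fun _ : ℤ => E) p) :
    Memℓp (fun n : ℤ => v (n - 1)) p := by
  have hq := hq_pos p hp
  rw [memℓp_gen_iff hq]
  exact ((Equiv.subRight (1 : ℤ)).summable_iff).mpr ((lp.memℓp v).summable hq)

lemma memℓp_unshift (hp : p ≠ ∞) (v : lp (fun _ : ℤ => E) p) :
    Memℓp (fun n : ℤ => v (n + 1)) p := by
  have hq := hq_pos p hp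
  rw [memℓp_gen_iff hq]
  exact ((Equiv.addRight (1 : ℤ)).summable_iff).mpr ((lp.memℓp v).summable hq)

lemma memℓp_diag (hp : p ≠ ∞) (b : E →L[ℂ] E) (v : lp (fun _ : ℤ => E) p) :
    Memℓp (fun n : ℤ => b (v n)) p := by
  have hq := hq_pos p hp
  rw [memℓp_gen_iff hq]
  refine Summable.of_nonneg_of_le
    (fun n => Real.rpow_nonneg (norm_nonneg _) _)
    (fun n => ?_)
    (((lp.memℓp v).summable hq).mul_left (‖b‖ ^ p.toReal))
  calc ‖b (v n)‖ ^ p.toReal ≤ (‖b‖ * ‖v n‖) ^ p.toReal :=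
        Real.rpow_le_rpow (norm_nonneg _) (b.le_opNorm _) hq.le
    _ = ‖b‖ ^ p.toReal * ‖v n‖ ^ p.toReal :=
        Real.mul_rpow (norm_nonneg _) (norm_nonneg _)

/-- The shift `(v n) ↦ (v (n-1))` on `lp`. -/
def lpShift (hp : p ≠ ∞) : lp (fun _ : ℤ => E) p →L[ℂ] lp (fun _ : ℤ => E) p :=
  LinearMap.mkContinuous
    { toFun := fun v => ⟨fun n => v (n - 1), memℓp_shift p hp v⟩
      map_add' := fun v w => Subtype.ext (funext fun n => by
        simp only [lp.coeFn_add, Pi.add_apply])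
      map_smul' := fun c v => Subtype.ext (funext fun n => by
        simp only [lp.coeFn_smul, Pi.smul_apply, RingHom.id_apply]) }
    1 (fun v => by
      rw [one_mul]
      have hq := hq_pos p hp
      apply le_of_eq
      rw [lp.norm_eq_tsum_rpow hq, lp.norm_eq_tsum_rpow hq]
      congr 1
      exact (Equiv.subRight (1 : ℤ)).tsum_eq fun m => ‖v m‖ ^ p.toReal)

@[simp] lemma lpShift_apply (hp : p ≠ ∞) (v : lp (fun _ : ℤ => E) p) (n : ℤ) :
    lpShift p hp v n = v (n - 1) := rfl

/-- The inverse shift `(v n) ↦ (v (n+1))` on `lp`. -/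
def lpUnshift (hp : p ≠ ∞) : lp (fun _ : ℤ => E) p →L[ℂ] lp (fun _ : ℤ => E) p :=
  LinearMap.mkContinuous
    { toFun := fun v => ⟨fun n => v (n + 1), memℓp_unshift p hp v⟩
      map_add' := fun v w => Subtype.ext (funext fun n => by
        simp only [lp.coeFn_add, Pi.add_apply])
      map_smul' := fun c v => Subtype.ext (funext fun n => by
        simp only [lp.coeFn_smul, Pi.smul_apply, RingHom.id_apply]) }
    1 (fun v => by
      rw [one_mul]
      have hq := hq_pos p hp
      apply le_of_eq
      rw [lp.norm_eq_tsum_rpow hq, lp.norm_eq_tsum_rpow hq]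
      congr 1
      exact (Equiv.addRight (1 : ℤ)).tsum_eq fun m => ‖v m‖ ^ p.toReal)

@[simp] lemma lpUnshift_apply (hp : p ≠ ∞) (v : lp (fun _ : ℤ => E) p) (n : ℤ) :
    lpUnshift p hp v n = v (n + 1) := rfl

/-- Diagonal operator on `lp`. -/
def lpDiag (hp : p ≠ ∞) (b : E →L[ℂ] E) : lp (fun _ : ℤ => E) p →L[ℂ] lp (fun _ : ℤ => E) p :=
  LinearMap.mkContinuous
    { toFun := fun v => ⟨fun n => b (v n), memℓp_diag p hp b v⟩
      map_add' := fun v w => Subtype.ext (funext fun n => by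
        simp only [lp.coeFn_add, Pi.add_apply]
        show b (v n + w n) = b (v n) + b (w n)
        simp)
      map_smul' := fun c v => Subtype.ext (funext fun n => by
        simp only [lp.coeFn_smul, Pi.smul_apply, RingHom.id_apply]
        show b (c • v n) = c • b (v n)
        simp) }
    ‖b‖ (fun v => by
      have hq := hq_pos p hp
      apply lp.norm_le_of_tsum_le hq (mul_nonneg (norm_nonneg b) (norm_nonneg v))
      have hsum : ∀ n : ℤ, ‖b (v n)‖ ^ p.toReal ≤ ‖b‖ ^ p.toReal * ‖v n‖ ^ p.toReal := by
        intro n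
        calc ‖b (v n)‖ ^ p.toReal ≤ (‖b‖ * ‖v n‖) ^ p.toReal :=
              Real.rpow_le_rpow (norm_nonneg _) (b.le_opNorm _) hq.le
          _ = ‖b‖ ^ p.toReal * ‖v n‖ ^ p.toReal :=
              Real.mul_rpow (norm_nonneg _) (norm_nonneg _)
      calc (∑' n : ℤ, ‖(⟨fun n => b (v n), memℓp_diag p hp b v⟩ : lp (fun _ : ℤ => E) p) n‖ ^ p.toReal)
          ≤ ∑' n : ℤ, ‖b‖ ^ p.toReal * ‖v n‖ ^ p.toReal := by
            refine Summable.tsum_le_tsum hsum ?_ (((lp.memℓp v).summable hq).mul_left _)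
            rw [← memℓp_gen_iff hq]
            exact memℓp_diag p hp b v
        _ = ‖b‖ ^ p.toReal * ∑' n : ℤ, ‖v n‖ ^ p.toReal := tsum_mul_left
        _ = ‖b‖ ^ p.toReal * ‖v‖ ^ p.toReal := by rw [← lp.norm_rpow_eq_tsum hq]
        _ = (‖b‖ * ‖v‖) ^ p.toReal := (Real.mul_rpow (norm_nonneg _) (norm_nonneg _)).symm)

@[simp] lemma lpDiag_apply (hp : p ≠ ∞) (b : E →L[ℂ] E) (v : lp (fun _ : ℤ => E) p) (n : ℤ) :
    lpDiag p hp b v n = b (v n) := rfl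

end lpOps

section lpAlg

variable {E : Type*} [NormedAddCommGroup E] [NormedSpace ℂ E]
variable (p : ℝ≥0∞) [Fact (1 ≤ p)]

lemma lpDiag_mul (hp : p ≠ ∞) (b c : E →L[ℂ] E) :
    lpDiag p hp (b * c) = lpDiag p hp b * lpDiag p hp c := by
  refine ContinuousLinearMap.ext fun v => Subtype.ext (funext fun n => ?_)
  simp [ContinuousLinearMap.mul_apply]

lemma lpDiag_one (hp : p ≠ ∞) : lpDiag p hp (1 : E →L[ℂ] E) = 1 := by
  refine ContinuousLinearMap.ext fun v => Subtype.ext (funext fun n => ?_)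
  simp [ContinuousLinearMap.one_apply]

lemma lpDiag_sub (hp : p ≠ ∞) (b c : E →L[ℂ] E) :
    lpDiag p hp (b - c) = lpDiag p hp b - lpDiag p hp c := by
  refine ContinuousLinearMap.ext fun v => Subtype.ext (funext fun n => ?_)
  simp only [ContinuousLinearMap.sub_apply, lpDiag_apply, lp.coeFn_sub, Pi.sub_apply]

lemma lpDiag_algebraMap (hp : p ≠ ∞) (z : ℂ) :
    lpDiag p hp (algebraMap ℂ (E →L[ℂ] E) z) =
      algebraMap ℂ (lp (fun _ : ℤ => E) p →L[ℂ] lp (fun _ : ℤ => E) p) z := by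
  refine ContinuousLinearMap.ext fun v => Subtype.ext (funext fun n => ?_)
  simp only [lpDiag_apply, Algebra.algebraMap_eq_smul_one, ContinuousLinearMap.smul_apply,
    ContinuousLinearMap.one_apply, lp.coeFn_smul, Pi.smul_apply]

lemma isUnit_of_lpDiag [CompleteSpace E] (hp : p ≠ ∞) (b : E →L[ℂ] E)
    (h : IsUnit (lpDiag p hp b)) : IsUnit b := by
  rw [ContinuousLinearMap.isUnit_iff_bijective] at h ⊢
  obtain ⟨hinj, hsurj⟩ := h
  constructor
  · intro x y hxy
    have h1 : lpDiag p hp b (lp.single p 0 x) = lpDiag p hp b (lp.single p 0 y) := by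
      refine Subtype.ext (funext fun n => ?_)
      simp only [lpDiag_apply]
      by_cases hn : n = 0
      · subst hn
        rw [lp.single_apply_self, lp.single_apply_self]
        exact hxy
      · rw [lp.single_apply_ne p 0 _ hn, lp.single_apply_ne p 0 _ hn]
    have h2 := hinj h1
    have h3 := congrArg (fun f : lp (fun _ : ℤ => E) p => (f : ∀ _ : ℤ, E) 0) h2
    simpa [lp.single_apply_self] using h3
  · intro x
    obtain ⟨v, hv⟩ := hsurj (lp.single p 0 x)
    refine ⟨v 0, ?_⟩
    have h3 := congrArg (fun f : lp (fun _ : ℤ => E) p => (f : ∀ _ : ℤ, E) 0) hv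
    simpa [lp.single_apply_self] using h3

lemma lp_spectrum_diag [CompleteSpace E] (hp : p ≠ ∞) (b : E →L[ℂ] E) :
    spectrum ℂ (lpDiag p hp b) = spectrum ℂ b := by
  ext z
  rw [spectrum.mem_iff, spectrum.mem_iff, not_iff_not]
  have key : algebraMap ℂ (lp (fun _ : ℤ => E) p →L[ℂ] lp (fun _ : ℤ => E) p) z -
      lpDiag p hp b = lpDiag p hp (algebraMap ℂ (E →L[ℂ] E) z - b) := by
    rw [lpDiag_sub, lpDiag_algebraMap]
  rw [key]
  constructor
  · exact isUnit_of_lpDiag p hp _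
  · rintro ⟨u, hu⟩
    refine ⟨⟨lpDiag p hp ↑u, lpDiag p hp ↑u⁻¹, ?_, ?_⟩, congrArg (lpDiag p hp) hu⟩
    · rw [← lpDiag_mul, u.mul_inv, lpDiag_one]
    · rw [← lpDiag_mul, u.inv_mul, lpDiag_one]

end lpAlg


section c0Ops

variable {E : Type*} [NormedAddCommGroup E] [NormedSpace ℂ E]

lemma c0_tendsto (v : C₀(ℤ, E)) : Tendsto v cofinite (𝓝 0) := by
  rw [← cocompact_eq_cofinite ℤ]
  exact ZeroAtInftyContinuousMapClass.zero_at_infty v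

lemma c0_norm_le (f : C₀(ℤ, E)) {C : ℝ} (hC : 0 ≤ C) : ‖f‖ ≤ C ↔ ∀ n, ‖f n‖ ≤ C := by
  rw [← ZeroAtInftyContinuousMap.norm_toBCF_eq_norm]
  exact BoundedContinuousFunction.norm_le hC

lemma c0_apply_le_norm (f : C₀(ℤ, E)) (n : ℤ) : ‖f n‖ ≤ ‖f‖ :=
  (c0_norm_le f (norm_nonneg f)).mp le_rfl n

/-- Shift on `C₀(ℤ, E)`. -/
def c0ShiftFun (v : C₀(ℤ, E)) : C₀(ℤ, E) :=
  ⟨⟨fun n => v (n - 1), continuous_of_discreteTopology⟩, by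
    rw [cocompact_eq_cofinite ℤ]
    have hinj : Function.Injective (fun n : ℤ => n - 1) := fun n m h => by simpa using h
    exact (c0_tendsto v).comp hinj.tendsto_cofinite⟩

@[simp] lemma c0ShiftFun_apply (v : C₀(ℤ, E)) (n : ℤ) : c0ShiftFun v n = v (n - 1) := rfl

def c0UnshiftFun (v : C₀(ℤ, E)) : C₀(ℤ, E) :=
  ⟨⟨fun n => v (n + 1), continuous_of_discreteTopology⟩, by
    rw [cocompact_eq_cofinite ℤ]
    have hinj : Function.Injective (fun n : ℤ => n + 1) := fun n m h => by simpa using h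
    exact (c0_tendsto v).comp hinj.tendsto_cofinite⟩

@[simp] lemma c0UnshiftFun_apply (v : C₀(ℤ, E)) (n : ℤ) : c0UnshiftFun v n = v (n + 1) := rfl

def c0DiagFun (b : E →L[ℂ] E) (v : C₀(ℤ, E)) : C₀(ℤ, E) :=
  ⟨⟨fun n => b (v n), continuous_of_discreteTopology⟩, by
    rw [cocompact_eq_cofinite ℤ]
    have hb : Tendsto b (𝓝 0) (𝓝 0) := by
      simpa [map_zero] using b.continuous.tendsto 0
    exact hb.comp (c0_tendsto v)⟩

@[simp] lemma c0DiagFun_apply (b : E →L[ℂ] E) (v : C₀(ℤ, E)) (n : ℤ) :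
    c0DiagFun b v n = b (v n) := rfl

/-- Shift as a continuous linear map. -/
def c0Shift : C₀(ℤ, E) →L[ℂ] C₀(ℤ, E) :=
  LinearMap.mkContinuous
    { toFun := c0ShiftFun
      map_add' := fun v w => ZeroAtInftyContinuousMap.ext fun n => by
        simp [ZeroAtInftyContinuousMap.coe_add]
      map_smul' := fun c v => ZeroAtInftyContinuousMap.ext fun n => by
        simp [ZeroAtInftyContinuousMap.coe_smul] }
    1 (fun v => by
      rw [one_mul]
      exact (c0_norm_le _ (norm_nonneg v)).mpr fun n => c0_apply_le_norm v (n - 1))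

@[simp] lemma c0Shift_apply (v : C₀(ℤ, E)) (n : ℤ) : c0Shift v n = v (n - 1) := rfl

def c0Unshift : C₀(ℤ, E) →L[ℂ] C₀(ℤ, E) :=
  LinearMap.mkContinuous
    { toFun := c0UnshiftFun
      map_add' := fun v w => ZeroAtInftyContinuousMap.ext fun n => by
        simp [ZeroAtInftyContinuousMap.coe_add]
      map_smul' := fun c v => ZeroAtInftyContinuousMap.ext fun n => by
        simp [ZeroAtInftyContinuousMap.coe_smul] }
    1 (fun v => by
      rw [one_mul]
      exact (c0_norm_le _ (norm_nonneg v)).mpr fun n => c0_apply_le_norm v (n + 1))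

@[simp] lemma c0Unshift_apply (v : C₀(ℤ, E)) (n : ℤ) : c0Unshift v n = v (n + 1) := rfl

def c0Diag (b : E →L[ℂ] E) : C₀(ℤ, E) →L[ℂ] C₀(ℤ, E) :=
  LinearMap.mkContinuous
    { toFun := c0DiagFun b
      map_add' := fun v w => ZeroAtInftyContinuousMap.ext fun n => by
        simp [ZeroAtInftyContinuousMap.coe_add]
      map_smul' := fun c v => ZeroAtInftyContinuousMap.ext fun n => by
        simp [ZeroAtInftyContinuousMap.coe_smul] }
    ‖b‖ (fun v => by
      refine (c0_norm_le _ (mul_nonneg (norm_nonneg b) (norm_nonneg v))).mpr fun n => ?_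
      calc ‖c0DiagFun b v n‖ = ‖b (v n)‖ := rfl
        _ ≤ ‖b‖ * ‖v n‖ := b.le_opNorm _
        _ ≤ ‖b‖ * ‖v‖ := by
            exact mul_le_mul_of_nonneg_left (c0_apply_le_norm v n) (norm_nonneg b))

@[simp] lemma c0Diag_apply (b : E →L[ℂ] E) (v : C₀(ℤ, E)) (n : ℤ) :
    c0Diag b v n = b (v n) := rfl

/-- Delta function at `0`. -/
def c0Single (x : E) : C₀(ℤ, E) :=
  ⟨⟨fun n => if n = 0 then x else 0, continuous_of_discreteTopology⟩, by
    rw [cocompact_eq_cofinite ℤ]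
    apply Tendsto.congr' _ (tendsto_const_nhds : Tendsto (fun _ : ℤ => (0 : E)) _ _)
    rw [eventuallyEq_iff_exists_mem]
    exact ⟨{n | n ≠ 0}, by
      rw [mem_cofinite]
      simpa using Set.finite_singleton (0 : ℤ), fun n hn => (if_neg hn).symm⟩⟩

@[simp] lemma c0Single_apply_self (x : E) : c0Single x 0 = x := rfl

lemma c0Single_apply_ne (x : E) {n : ℤ} (hn : n ≠ 0) : c0Single x n = 0 :=
  if_neg hn

lemma c0Diag_mul (b c : E →L[ℂ] E) : c0Diag (b * c) = c0Diag b * c0Diag c := by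
  refine ContinuousLinearMap.ext fun v => ZeroAtInftyContinuousMap.ext fun n => ?_
  simp [ContinuousLinearMap.mul_apply]

lemma c0Diag_one : c0Diag (1 : E →L[ℂ] E) = 1 := by
  refine ContinuousLinearMap.ext fun v => ZeroAtInftyContinuousMap.ext fun n => ?_
  simp [ContinuousLinearMap.one_apply]

lemma c0Diag_sub (b c : E →L[ℂ] E) : c0Diag (b - c) = c0Diag b - c0Diag c := by
  refine ContinuousLinearMap.ext fun v => ZeroAtInftyContinuousMap.ext fun n => ?_
  simp [ContinuousLinearMap.sub_apply, ZeroAtInftyContinuousMap.coe_sub]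

lemma c0Diag_algebraMap (z : ℂ) :
    c0Diag (algebraMap ℂ (E →L[ℂ] E) z) = algebraMap ℂ (C₀(ℤ, E) →L[ℂ] C₀(ℤ, E)) z := by
  refine ContinuousLinearMap.ext fun v => ZeroAtInftyContinuousMap.ext fun n => ?_
  simp [Algebra.algebraMap_eq_smul_one, ContinuousLinearMap.smul_apply,
    ContinuousLinearMap.one_apply, ZeroAtInftyContinuousMap.coe_smul]

lemma isUnit_of_c0Diag [CompleteSpace E] (b : E →L[ℂ] E)
    (h : IsUnit (c0Diag b)) : IsUnit b := by
  rw [ContinuousLinearMap.isUnit_iff_bijective] at h ⊢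
  obtain ⟨hinj, hsurj⟩ := h
  constructor
  · intro x y hxy
    have h1 : c0Diag b (c0Single x) = c0Diag b (c0Single y) := by
      refine ZeroAtInftyContinuousMap.ext fun n => ?_
      simp only [c0Diag_apply]
      by_cases hn : n = 0
      · subst hn
        rw [c0Single_apply_self, c0Single_apply_self]
        exact hxy
      · rw [c0Single_apply_ne x hn, c0Single_apply_ne y hn]
    have h2 := hinj h1
    have h3 := congrArg (fun f : C₀(ℤ, E) => f 0) h2
    simpa using h3
  · intro x
    obtain ⟨v, hv⟩ := hsurj (c0Single x)
    refine ⟨v 0, ?_⟩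
    have h3 := congrArg (fun f : C₀(ℤ, E) => f 0) hv
    simpa using h3

lemma c0_spectrum_diag [CompleteSpace E] (b : E →L[ℂ] E) :
    spectrum ℂ (c0Diag b) = spectrum ℂ b := by
  ext z
  rw [spectrum.mem_iff, spectrum.mem_iff, not_iff_not]
  have key : algebraMap ℂ (C₀(ℤ, E) →L[ℂ] C₀(ℤ, E)) z - c0Diag b =
      c0Diag (algebraMap ℂ (E →L[ℂ] E) z - b) := by
    rw [c0Diag_sub, c0Diag_algebraMap]
  rw [key]
  constructor
  · exact isUnit_of_c0Diag _
  · rintro ⟨u, hu⟩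
    refine ⟨⟨c0Diag ↑u, c0Diag ↑u⁻¹, ?_, ?_⟩, congrArg c0Diag hu⟩
    · rw [← c0Diag_mul, u.mul_inv, c0Diag_one]
    · rw [← c0Diag_mul, u.inv_mul, c0Diag_one]

end c0Ops

/-- For a bounded operator `a` on `E`, the following are equivalent:
(1) `σ(a) ∩ 𝕋 = ∅` in `E`; (2) `σ(D_a S) ∩ 𝕋 = ∅` in `F_s`, where `F_s` is one of the
sequence spaces `l_p(ℤ;E)`, `1 ≤ p < ∞`, or `c₀(ℤ;E)`, `S` is the shift
`(v_n) ↦ (v_{n-1})` and `D_a` the diagonal operator `(v_n) ↦ (a v_n)`. -/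
theorem statement5
    {E : Type*} [NormedAddCommGroup E] [NormedSpace ℂ E] [CompleteSpace E]
    (a : E →L[ℂ] E) :
    (∀ (p : ℝ≥0∞) [Fact (1 ≤ p)], p ≠ ∞ →
      ∀ W : lp (fun _ : ℤ => E) p →L[ℂ] lp (fun _ : ℤ => E) p,
        (∀ (v : lp (fun _ : ℤ => E) p) (n : ℤ), (W v) n = a (v (n - 1))) →
        (spectrum ℂ a ∩ Metric.sphere (0 : ℂ) 1 = ∅ ↔
          spectrum ℂ W ∩ Metric.sphere (0 : ℂ) 1 = ∅)) ∧
    (∀ W : ZeroAtInftyContinuousMap ℤ E →L[ℂ] ZeroAtInftyContinuousMap ℤ E,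
        (∀ (v : ZeroAtInftyContinuousMap ℤ E) (n : ℤ), (W v) n = a (v (n - 1))) →
        (spectrum ℂ a ∩ Metric.sphere (0 : ℂ) 1 = ∅ ↔
          spectrum ℂ W ∩ Metric.sphere (0 : ℂ) 1 = ∅)) := by
  constructor
  · intro p hFact hp W hWc
    haveI := hFact
    by_cases hE : Subsingleton E
    · haveI := hE
      haveI : Subsingleton (E →L[ℂ] E) :=
        ⟨fun f g => ContinuousLinearMap.ext fun x => Subsingleton.elim _ _⟩
      haveI : Subsingleton (lp (fun _ : ℤ => E) p) :=
        ⟨fun f g => Subtype.ext (funext fun n => Subsingleton.elim _ _)⟩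
      haveI : Subsingleton (lp (fun _ : ℤ => E) p →L[ℂ] lp (fun _ : ℤ => E) p) :=
        ⟨fun f g => ContinuousLinearMap.ext fun x => Subsingleton.elim _ _⟩
      rw [spec_empty_of_subsingleton a, spec_empty_of_subsingleton W]
    · haveI : Nontrivial E := not_subsingleton_iff_nontrivial.mp hE
      obtain ⟨x, hx⟩ := exists_ne (0 : E)
      haveI : Nontrivial (lp (fun _ : ℤ => E) p) := by
        refine ⟨lp.single p 0 x, 0, fun h => hx ?_⟩
        have h0 := congrArg (fun f : lp (fun _ : ℤ => E) p => (f : ∀ _ : ℤ, E) 0) h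
        simpa [lp.single_apply_self] using h0
      have hW : W = lpDiag p hp a * lpShift p hp :=
        ContinuousLinearMap.ext fun v => Subtype.ext (funext fun n => by
          simp [hWc v n, ContinuousLinearMap.mul_apply])
      refine key a W (lpDiag p hp a) (lpShift p hp) (lpUnshift p hp) hW ?_ ?_ ?_ ?_ ?_
        (lp_spectrum_diag p hp a)
      · exact ContinuousLinearMap.ext fun v => Subtype.ext (funext fun n => by
          simp [ContinuousLinearMap.mul_apply])
      · exact ContinuousLinearMap.ext fun v => Subtype.ext (funext fun n => by
          simp [ContinuousLinearMap.mul_apply, ContinuousLinearMap.one_apply])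
      · exact ContinuousLinearMap.ext fun v => Subtype.ext (funext fun n => by
          simp [ContinuousLinearMap.mul_apply, ContinuousLinearMap.one_apply])
      · exact LinearMap.mkContinuous_norm_le _ zero_le_one _
      · exact LinearMap.mkContinuous_norm_le _ zero_le_one _
  · intro W hWc
    by_cases hE : Subsingleton E
    · haveI := hE
      haveI : Subsingleton (E →L[ℂ] E) :=
        ⟨fun f g => ContinuousLinearMap.ext fun x => Subsingleton.elim _ _⟩
      haveI : Subsingleton (ZeroAtInftyContinuousMap ℤ E) :=
        ⟨fun f g => ZeroAtInftyContinuousMap.ext fun n => Subsingleton.elim _ _⟩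
      haveI : Subsingleton
          (ZeroAtInftyContinuousMap ℤ E →L[ℂ] ZeroAtInftyContinuousMap ℤ E) :=
        ⟨fun f g => ContinuousLinearMap.ext fun x => Subsingleton.elim _ _⟩
      rw [spec_empty_of_subsingleton a, spec_empty_of_subsingleton W]
    · haveI : Nontrivial E := not_subsingleton_iff_nontrivial.mp hE
      obtain ⟨x, hx⟩ := exists_ne (0 : E)
      haveI : Nontrivial (ZeroAtInftyContinuousMap ℤ E) := by
        refine ⟨c0Single x, 0, fun h => hx ?_⟩
        have h0 := congrArg (fun f : ZeroAtInftyContinuousMap ℤ E => f 0) h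
        simpa using h0
      have hW : W = c0Diag a * c0Shift :=
        ContinuousLinearMap.ext fun v => ZeroAtInftyContinuousMap.ext fun n => by
          simp [hWc v n, ContinuousLinearMap.mul_apply]
      refine key a W (c0Diag a) c0Shift c0Unshift hW ?_ ?_ ?_ ?_ ?_ (c0_spectrum_diag a)
      · exact ContinuousLinearMap.ext fun v => ZeroAtInftyContinuousMap.ext fun n => by
          simp [ContinuousLinearMap.mul_apply]
      · exact ContinuousLinearMap.ext fun v => ZeroAtInftyContinuousMap.ext fun n => by
          simp [ContinuousLinearMap.mul_apply, ContinuousLinearMap.one_apply]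
      · exact ContinuousLinearMap.ext fun v => ZeroAtInftyContinuousMap.ext fun n => by
          simp [ContinuousLinearMap.mul_apply, ContinuousLinearMap.one_apply]
      · exact LinearMap.mkContinuous_norm_le _ zero_le_one _
      · exact LinearMap.mkContinuous_norm_le _ zero_le_one _
end
end

section
/- Let a be a bounded linear operator on E, 1≤p<∞. If I − D_a S maps l_p(ℤ;E) onto l_p(ℤ;E), then I − a has dense range in E. -/
/-!
If `u ∈ ℓ_p` solves `u n - a (u (n - 1)) = δ_{n,0} y`, summing over the window `-N-1 < n ≤ N`
telescopes to `(1 - a) (∑ u n) = y - a (u N - u (-N-1))`, and the right-hand side tends to `y`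
because the entries of an `ℓ_p` sequence, `p < ∞`, tend to zero.
-/

open MeasureTheory Filter Topology
open scoped ENNReal

noncomputable section

open Finset

theorem Int.sum_Ioc_sub_sub_one {M : Type*} [AddCommGroup M] (f : ℤ → M) {m n : ℤ}
    (hmn : m ≤ n) :
    ∑ i ∈ Ioc m n, (f i - f (i - 1)) = f n - f m := by
  induction n, hmn using Int.leInduction with
  | base => simp
  | succ n hmn ih =>
    rw [← insert_Ioc_right_eq_Ioc_add_one hmn, sum_insert (by simp), ih, add_sub_cancel_right]
    abel

theorem Memℓp.tendsto_norm_cofinite_zero {α : Type*} {E : α → Type*}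
    [∀ i, NormedAddCommGroup (E i)] {p : ℝ≥0∞} {f : ∀ i, E i} (hf : Memℓp f p)
    (hp : p ≠ ∞) :
    Tendsto (fun i => ‖f i‖) cofinite (𝓝 0) := by
  rcases eq_or_ne p 0 with rfl | hp₀
  · refine tendsto_const_nhds.congr' ?_
    filter_upwards [(memℓp_zero_iff.mp hf).compl_mem_cofinite] with i hi
    simp_all
  · have hr : 0 < p.toReal := ENNReal.toReal_pos hp₀ hp
    have h := (hf.summable hr).tendsto_cofinite_zero.rpow_const (p := p.toReal⁻¹)
      (.inr (by positivity))
    rw [Real.zero_rpow (inv_ne_zero hr.ne')] at h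
    refine h.congr fun i => ?_
    exact Real.rpow_rpow_inv (norm_nonneg _) hr.ne'

theorem sum_Ioc_sub_map_sub_one {E F : Type*} [AddCommGroup E] [FunLike F E E]
    [AddMonoidHomClass F E E] (a : F) (u : ℤ → E) {m n : ℤ} (hmn : m ≤ n) :
    ∑ i ∈ Ioc m n, (u i - a (u (i - 1))) =
      (∑ i ∈ Ioc m n, u i) - a (∑ i ∈ Ioc m n, u i) + a (u n - u m) := by
  have h : ∀ i, u i - a (u (i - 1)) = (u i - a (u i)) + a (u i - u (i - 1)) := fun i => by
    rw [map_sub]; abel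
  simp only [h, sum_add_distrib, sum_sub_distrib, ← map_sum, Int.sum_Ioc_sub_sub_one u hmn]

theorem mem_closure_range_one_sub_of_tendsto {R E : Type*} [Ring R] [AddCommGroup E]
    [Module R E] [TopologicalSpace E] [IsTopologicalAddGroup E] [ContinuousConstSMul R E]
    (a : E →L[R] E) {u : ℤ → E} {y : E} (hu : Tendsto u cofinite (𝓝 0))
    (heq : ∀ n, u n - a (u (n - 1)) = (Pi.single 0 y : ℤ → E) n) :
    y ∈ closure (Set.range ((1 : E →L[R] E) - a)) := by
  have hS (N : ℕ) :
      (1 - a) (∑ i ∈ Ioc (-(N : ℤ) - 1) N, u i) = y - a (u N - u (-(N : ℤ) - 1)) := by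
    have h := sum_Ioc_sub_map_sub_one a u (m := -(N : ℤ) - 1) (n := N) (by omega)
    rw [sum_congr rfl fun i _ => heq i, sum_pi_single', if_pos (by simp only [mem_Ioc]; omega)] at h
    simp [h]
  have hpos : Tendsto (fun N : ℕ => u N) atTop (𝓝 0) :=
    hu.comp (Nat.cofinite_eq_atTop ▸ Nat.cast_injective.tendsto_cofinite)
  have hinj : Function.Injective fun N : ℕ => -(N : ℤ) - 1 := fun m n h => by simpa using h
  have hneg : Tendsto (fun N : ℕ => u (-(N : ℤ) - 1)) atTop (𝓝 0) :=
    hu.comp (Nat.cofinite_eq_atTop ▸ hinj.tendsto_cofinite)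
  have hdiff : Tendsto (fun N : ℕ => u N - u (-(N : ℤ) - 1)) atTop (𝓝 0) := by
    simpa using hpos.sub hneg
  have hlim : Tendsto (fun N : ℕ => y - a (u N - u (-(N : ℤ) - 1))) atTop (𝓝 y) := by
    simpa using tendsto_const_nhds.sub ((a.continuous.tendsto' 0 0 (map_zero a)).comp hdiff)
  exact mem_closure_of_tendsto (hlim.congr fun N => (hS N).symm) (.of_forall fun N => ⟨_, rfl⟩)

theorem statement6_general
    {E : Type*} [NormedAddCommGroup E] [NormedSpace ℂ E]
    (a : E →L[ℂ] E) (p : ℝ≥0∞) [Fact (1 ≤ p)] (hp : p ≠ ∞)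
    (W : lp (fun _ : ℤ => E) p →L[ℂ] lp (fun _ : ℤ => E) p)
    (hW : ∀ (v : lp (fun _ : ℤ => E) p) (n : ℤ), (W v) n = a (v (n - 1)))
    (hsurj : Function.Surjective ⇑((1 : lp (fun _ : ℤ => E) p →L[ℂ]
      lp (fun _ : ℤ => E) p) - W)) :
    DenseRange ⇑((1 : E →L[ℂ] E) - a) := by
  intro y
  obtain ⟨u, hu⟩ := hsurj (lp.single p 0 y)
  refine mem_closure_range_one_sub_of_tendsto a (u := ⇑u) ?_ fun n => ?_
  · exact tendsto_zero_iff_norm_tendsto_zero.mpr ((lp.memℓp u).tendsto_norm_cofinite_zero hp)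
  · rw [← hW, ← lp.single_apply p, ← hu]
    rfl

/-- Let `a` be a bounded operator on `E` and `1 ≤ p < ∞`. If
`I - D_a S` maps `l_p(ℤ;E)` onto itself (where `S` is the shift `(v_n) ↦ (v_{n-1})`
and `D_a` the diagonal operator `(v_n) ↦ (a v_n)`), then `I - a` has dense range
in `E`. -/
theorem statement6
    {E : Type*} [NormedAddCommGroup E] [NormedSpace ℂ E] [CompleteSpace E]
    (a : E →L[ℂ] E) (p : ℝ≥0∞) [Fact (1 ≤ p)] (hp : p ≠ ∞)
    (W : lp (fun _ : ℤ => E) p →L[ℂ] lp (fun _ : ℤ => E) p)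
    (hW : ∀ (v : lp (fun _ : ℤ => E) p) (n : ℤ), (W v) n = a (v (n - 1)))
    (hsurj : Function.Surjective ⇑((1 : lp (fun _ : ℤ => E) p →L[ℂ]
      lp (fun _ : ℤ => E) p) - W)) :
    DenseRange ⇑((1 : E →L[ℂ] E) - a) :=
  statement6_general a p hp W hW hsurj
end
end

section
/- Let a be a bounded linear operator on E, 1≤p<∞. If 1 belongs to the approximate point spectrum of a on E, then I − D_a S is not bounded below on l_p(ℤ;E); more precisely, for every ε>0 there is a nonzero sequence (v_n) ∈ l_p(ℤ;E) with ‖(I − D_a S)(v_n)‖ ≤ (1+‖a‖)·ε·‖(v_n)‖. In particular, if I − D_a S is invertible on l_p(ℤ;E), then 1 is not in the approximate point spectrum of a. -/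
open MeasureTheory Filter Topology
open scoped ENNReal

noncomputable section

set_option maxHeartbeats 1000000 in
theorem statement7_aux
    {E : Type*} [NormedAddCommGroup E] [NormedSpace ℂ E] [CompleteSpace E]
    (a : E →L[ℂ] E) (p : ℝ≥0∞) [Fact (1 ≤ p)] (hp : p ≠ ∞)
    (W : lp (fun _ : ℤ => E) p →L[ℂ] lp (fun _ : ℤ => E) p)
    (hW : ∀ (v : lp (fun _ : ℤ => E) p) (n : ℤ), (W v) n = a (v (n - 1)))
    (h1 : (1 : ℂ) ∈ approxSpectrum a) :
    ∀ ε > (0 : ℝ), ∃ v : lp (fun _ : ℤ => E) p, v ≠ 0 ∧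
      ‖((1 : lp (fun _ : ℤ => E) p →L[ℂ] lp (fun _ : ℤ => E) p) - W) v‖ ≤
        (1 + ‖a‖) * ε * ‖v‖ := by
  classical
  have hq1 : 1 ≤ p.toReal := by
    have h := Fact.out (p := (1 : ℝ≥0∞) ≤ p)
    rw [← ENNReal.toReal_one]
    exact (ENNReal.toReal_le_toReal (by simp) hp).mpr h
  have hq0 : 0 < p.toReal := lt_of_lt_of_le one_pos hq1
  set q := p.toReal with hqdef
  -- coordinates of `lp.single` for a constant family
  have hsingle : ∀ (i m : ℤ) (y : E),
      (lp.single p i y : ∀ _ : ℤ, E) m = if m = i then y else 0 := by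
    intro i m y
    by_cases h : m = i
    · subst h; simp [lp.single_apply_self]
    · simp [lp.single_apply_ne p i _ h, h]
  intro ε hε
  set M := 1 + ‖a‖ with hMdef
  have hM : 1 ≤ M := le_add_of_nonneg_right (norm_nonneg a)
  have hδ : 0 < M * ε / 2 := by positivity
  obtain ⟨x, hx1, hxd⟩ := h1 (M * ε / 2) hδ
  rw [one_smul] at hxd
  obtain ⟨N, hN⟩ := exists_nat_ge ((2 / ε) ^ q)
  set P := ((N : ℝ) + 1) ^ (1 / q) with hPdef
  have hP : 2 / ε ≤ P := by
    have h2 : (0 : ℝ) ≤ 2 / ε := by positivity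
    calc 2 / ε = ((2 / ε) ^ q) ^ (1 / q) := by
          rw [one_div, Real.rpow_rpow_inv h2 hq0.ne']
      _ ≤ P := Real.rpow_le_rpow (by positivity) (hN.trans (by linarith)) (by positivity)
  have hPpos : 0 < P := lt_of_lt_of_le (by positivity) hP
  set v : lp (fun _ : ℤ => E) p :=
    ∑ n ∈ Finset.Icc (0 : ℤ) (N : ℤ), lp.single p n x with hvdef
  -- coordinates of v
  have hcoe : ∀ m : ℤ, (v : ∀ _ : ℤ, E) m =
      if 0 ≤ m ∧ m ≤ (N : ℤ) then x else 0 := by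
    intro m
    rw [hvdef, lp.coeFn_sum, Finset.sum_apply]
    simp only [hsingle]
    rw [Finset.sum_ite_eq (Finset.Icc (0 : ℤ) (N : ℤ)) m (fun _ => x)]
    simp [Finset.mem_Icc]
  -- norm of v
  have hcard : (Finset.Icc (0 : ℤ) (N : ℤ)).card = N + 1 := by
    rw [Int.card_Icc]; omega
  have hvnorm : ‖v‖ = P := by
    have h := lp.norm_sum_single hq0 (fun _ : ℤ => x) (Finset.Icc (0 : ℤ) (N : ℤ))
    rw [hx1] at h
    simp only [Real.one_rpow, Finset.sum_const, hcard, nsmul_eq_mul, mul_one] at h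
    have h2 := congrArg (· ^ (1 / q)) h
    simpa [one_div, Real.rpow_rpow_inv (norm_nonneg _) hq0.ne', Nat.cast_add,
      Nat.cast_one, hPdef, ← hvdef, ← hqdef] using h2
  have hvne : v ≠ 0 := by
    intro h0
    rw [h0, norm_zero] at hvnorm
    exact absurd hvnorm.symm (ne_of_gt hPpos)
  -- the key identity
  set u2 : lp (fun _ : ℤ => E) p :=
    ∑ n ∈ Finset.Icc (1 : ℤ) (N : ℤ), lp.single p n (x - a x) with hu2def
  have heq : ((1 : lp (fun _ : ℤ => E) p →L[ℂ] lp (fun _ : ℤ => E) p) - W) v =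
      lp.single p (0 : ℤ) x + u2 + lp.single p ((N : ℤ) + 1) (-(a x)) := by
    apply lp.ext
    funext m
    have hL : (((1 : lp (fun _ : ℤ => E) p →L[ℂ] lp (fun _ : ℤ => E) p) - W) v
        : ∀ _ : ℤ, E) m = (v : ∀ _ : ℤ, E) m - a ((v : ∀ _ : ℤ, E) (m - 1)) := by
      rw [ContinuousLinearMap.sub_apply, ContinuousLinearMap.one_apply, lp.coeFn_sub,
        Pi.sub_apply, hW]
    have hu2coe : (u2 : ∀ _ : ℤ, E) m =
        if 1 ≤ m ∧ m ≤ (N : ℤ) then x - a x else 0 := by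
      rw [hu2def, lp.coeFn_sum, Finset.sum_apply]
      simp only [hsingle]
      rw [Finset.sum_ite_eq (Finset.Icc (1 : ℤ) (N : ℤ)) m (fun _ => x - a x)]
      simp [Finset.mem_Icc]
    rw [hL, hcoe, hcoe, lp.coeFn_add, Pi.add_apply, lp.coeFn_add, Pi.add_apply,
      hu2coe, hsingle, hsingle]
    rw [apply_ite a, map_zero]
    split_ifs <;> first
      | (exfalso; omega)
      | abel1
  -- norm bound on u2
  have hu2norm : ‖u2‖ ≤ P * (M * ε / 2) := by
    have h := lp.norm_sum_single hq0 (fun _ : ℤ => x - a x) (Finset.Icc (1 : ℤ) (N : ℤ))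
    have hcard2 : (Finset.Icc (1 : ℤ) (N : ℤ)).card = N := by
      rw [Int.card_Icc]; omega
    simp only [Finset.sum_const, hcard2, nsmul_eq_mul] at h
    rw [← hu2def] at h
    have hle : ‖u2‖ ^ q ≤ (P * (M * ε / 2)) ^ q := by
      rw [h, Real.mul_rpow (le_of_lt hPpos) (le_of_lt hδ), hPdef, one_div,
        Real.rpow_inv_rpow (by positivity) hq0.ne']
      have hxd' : ‖x - a x‖ < M * ε / 2 := by rwa [norm_sub_rev]
      have h1' : ‖x - a x‖ ^ q ≤ (M * ε / 2) ^ q :=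
        Real.rpow_le_rpow (norm_nonneg _) (le_of_lt hxd') (le_of_lt hq0)
      have h2' : (N : ℝ) ≤ (N : ℝ) + 1 := by linarith
      calc (N : ℝ) * ‖x - a x‖ ^ q ≤ ((N : ℝ) + 1) * (M * ε / 2) ^ q := by
            apply mul_le_mul h2' h1' (by positivity) (by positivity)
        _ = _ := rfl
    exact (Real.rpow_le_rpow_iff (norm_nonneg _) (by positivity) hq0).mp hle
  -- assemble
  refine ⟨v, hvne, ?_⟩
  have hnx : ‖lp.single (E := fun _ : ℤ => E) p (0 : ℤ) x‖ = 1 := by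
    have h := lp.norm_single (E := fun _ : ℤ => E) (zero_lt_one.trans_le (Fact.out (p := (1 : ℝ≥0∞) ≤ p))) (0 : ℤ) x
    simpa [hx1] using h
  have hnax : ‖lp.single (E := fun _ : ℤ => E) p ((N : ℤ) + 1) (-(a x))‖ ≤ ‖a‖ := by
    have h := lp.norm_single (E := fun _ : ℤ => E) (zero_lt_one.trans_le (Fact.out (p := (1 : ℝ≥0∞) ≤ p))) ((N : ℤ) + 1) ((fun _ : ℤ => -(a x)) ((N : ℤ) + 1))
    simp only at h
    rw [h, norm_neg]
    calc ‖a x‖ ≤ ‖a‖ * ‖x‖ := a.le_opNorm x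
      _ = ‖a‖ := by rw [hx1, mul_one]
  have htri : ‖((1 : lp (fun _ : ℤ => E) p →L[ℂ] lp (fun _ : ℤ => E) p) - W) v‖ ≤
      1 + ‖u2‖ + ‖a‖ := by
    rw [heq]
    have t1 := norm_add_le (lp.single p (0 : ℤ) x + u2) (lp.single p ((N : ℤ) + 1) (-(a x)))
    have t2 := norm_add_le (lp.single p (0 : ℤ) x) u2
    linarith [t1, t2, hnax, hnx.le, hnx.ge]
  rw [hvnorm]
  have hPε : 2 ≤ P * ε := (div_le_iff₀ hε).mp hP
  have hfinal : 1 + (P * (M * ε / 2)) + ‖a‖ ≤ M * ε * P := by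
    have hMε : (0:ℝ) ≤ M := by linarith
    have h6 : 2 * M ≤ P * ε * M := by
      calc 2 * M = M * 2 := by ring
        _ ≤ M * (P * ε) := by
            exact mul_le_mul_of_nonneg_left hPε hMε
        _ = P * ε * M := by ring
    clear_value v u2 P M q
    linarith [h6, hMdef.le, hMdef.ge]
  calc ‖((1 : lp (fun _ : ℤ => E) p →L[ℂ] lp (fun _ : ℤ => E) p) - W) v‖ ≤
        1 + ‖u2‖ + ‖a‖ := htri
    _ ≤ 1 + (P * (M * ε / 2)) + ‖a‖ := by gcongr
    _ ≤ M * ε * P := hfinal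

/-- Let `a` be a bounded operator on `E`, `1 ≤ p < ∞`, and suppose
`1` belongs to the approximate point spectrum of `a`. Then `I - D_a S` is not bounded
below on `l_p(ℤ;E)`: for every `ε > 0` there is a nonzero `(v_n) ∈ l_p(ℤ;E)` with
`‖(I - D_a S)(v_n)‖ ≤ (1 + ‖a‖) ε ‖(v_n)‖`. In particular `I - D_a S` is not
invertible on `l_p(ℤ;E)`. -/
theorem statement7
    {E : Type*} [NormedAddCommGroup E] [NormedSpace ℂ E] [CompleteSpace E]
    (a : E →L[ℂ] E) (p : ℝ≥0∞) [Fact (1 ≤ p)] (hp : p ≠ ∞)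
    (W : lp (fun _ : ℤ => E) p →L[ℂ] lp (fun _ : ℤ => E) p)
    (hW : ∀ (v : lp (fun _ : ℤ => E) p) (n : ℤ), (W v) n = a (v (n - 1)))
    (h1 : (1 : ℂ) ∈ approxSpectrum a) :
    (∀ ε > (0 : ℝ), ∃ v : lp (fun _ : ℤ => E) p, v ≠ 0 ∧
      ‖((1 : lp (fun _ : ℤ => E) p →L[ℂ] lp (fun _ : ℤ => E) p) - W) v‖ ≤
        (1 + ‖a‖) * ε * ‖v‖) ∧
    ¬ IsUnit ((1 : lp (fun _ : ℤ => E) p →L[ℂ] lp (fun _ : ℤ => E) p) - W) := by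
  have key := statement7_aux a p hp W hW h1
  refine ⟨key, ?_⟩
  rintro ⟨u, hu⟩
  set b : lp (fun _ : ℤ => E) p →L[ℂ] lp (fun _ : ℤ => E) p := ↑u⁻¹ with hbdef
  have hbmul : b * ((1 : lp (fun _ : ℤ => E) p →L[ℂ] lp (fun _ : ℤ => E) p) - W) = 1 := by
    rw [← hu, hbdef]; exact u.inv_mul
  have hbinv : ∀ w : lp (fun _ : ℤ => E) p,
      b (((1 : lp (fun _ : ℤ => E) p →L[ℂ] lp (fun _ : ℤ => E) p) - W) w) = w := by
    intro w
    have := congrArg (fun T : lp (fun _ : ℤ => E) p →L[ℂ] lp (fun _ : ℤ => E) p => T w) hbmul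
    simp only [ContinuousLinearMap.mul_apply, ContinuousLinearMap.one_apply] at this
    exact this
  clear_value b
  have hA : (0 : ℝ) < 1 + ‖a‖ := by linarith [norm_nonneg a]
  have hB : (0 : ℝ) < 1 + ‖b‖ := by linarith [norm_nonneg b]
  set ε : ℝ := 1 / (2 * (1 + ‖a‖) * (1 + ‖b‖)) with hεdef
  have hεpos : 0 < ε := by
    rw [hεdef]
    apply one_div_pos.mpr
    have := mul_pos (mul_pos two_pos hA) hB
    linarith
  obtain ⟨v, hv0, hv⟩ := key ε hεpos
  have hvn : 0 < ‖v‖ := norm_pos_iff.mpr hv0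
  have h2 : ‖v‖ ≤ ‖b‖ * ‖((1 : lp (fun _ : ℤ => E) p →L[ℂ] lp (fun _ : ℤ => E) p) - W) v‖ := by
    conv_lhs => rw [← hbinv v]
    exact b.le_opNorm _
  have h3 : ‖v‖ ≤ ‖b‖ * ((1 + ‖a‖) * ε * ‖v‖) :=
    h2.trans (mul_le_mul_of_nonneg_left hv (norm_nonneg b))
  have hεe : (1 + ‖a‖) * ε * (2 * (1 + ‖b‖)) = 1 := by
    rw [hεdef]; field_simp
  have h4 : ‖b‖ * ((1 + ‖a‖) * ε * ‖v‖) * (2 * (1 + ‖b‖)) = ‖b‖ * ‖v‖ := by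
    calc ‖b‖ * ((1 + ‖a‖) * ε * ‖v‖) * (2 * (1 + ‖b‖))
        = ‖b‖ * ‖v‖ * ((1 + ‖a‖) * ε * (2 * (1 + ‖b‖))) := by ring
      _ = ‖b‖ * ‖v‖ := by rw [hεe, mul_one]
  have h5 : ‖v‖ * (2 * (1 + ‖b‖)) ≤ ‖b‖ * ‖v‖ := by
    calc ‖v‖ * (2 * (1 + ‖b‖)) ≤ ‖b‖ * ((1 + ‖a‖) * ε * ‖v‖) * (2 * (1 + ‖b‖)) := by
          apply mul_le_mul_of_nonneg_right h3 (by positivity)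
      _ = ‖b‖ * ‖v‖ := h4
  nlinarith [hvn, norm_nonneg b, h5]
end
end

section
/- Let {U(x,s)}_{x≥s} be an evolutionary family on E and t>0. Then the spectrum of the bounded operator e^{tG} on F, (e^{tG}f)(x) = U(x,x−t) f(x−t), is invariant under rotations centered at the origin: λ·σ(e^{tG}) = σ(e^{tG}) for every λ ∈ ℂ with |λ| = 1. -/
open MeasureTheory Filter Topology
open scoped Pointwise
open scoped ENNReal

noncomputable section

namespace Statement10Aux

/-- Spectrum is invariant under conjugation by a unit. -/
lemma spectrum_conj_units {A : Type*} [Ring A] [Algebra ℂ A] (u : Aˣ) (a : A) :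
    spectrum ℂ ((u : A) * a * ↑u⁻¹) = spectrum ℂ a := by
  ext z
  simp only [spectrum.mem_iff, not_iff_not]
  have h : algebraMap ℂ A z - ↑u * a * ↑u⁻¹ = ↑u * (algebraMap ℂ A z - a) * ↑u⁻¹ := by
    rw [mul_sub, sub_mul]
    congr 1
    rw [← Algebra.commutes z ((↑u : A)), mul_assoc, u.mul_inv, mul_one]
  rw [h, mul_assoc, Units.isUnit_units_mul, Units.isUnit_mul_units]

/-- A phase function `x ↦ e^{iax}`. -/
def phase (a x : ℝ) : ℂ := Complex.exp ((a * x : ℝ) * Complex.I)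

lemma norm_phase (a x : ℝ) : ‖phase a x‖ = 1 := Complex.norm_exp_ofReal_mul_I _

lemma phase_cont (a : ℝ) : Continuous (phase a) := by
  unfold phase; fun_prop

lemma phase_mul (a b x y c : ℝ) (h : a * x + b * y = c) :
    phase a x * phase b y = Complex.exp ((c : ℝ) * Complex.I) := by
  unfold phase
  rw [← Complex.exp_add, ← h]
  push_cast
  ring_nf


section Lp

variable {E : Type*} [NormedAddCommGroup E] [NormedSpace ℂ E] {p : ℝ≥0∞} [Fact (1 ≤ p)]

lemma memLp_phase_smul (a : ℝ) (f : Lp E p (volume : Measure ℝ)) :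
    MemLp (fun x => phase a x • (f : ℝ → E) x) p volume := by
  refine ⟨((phase_cont a).aestronglyMeasurable).smul (Lp.aestronglyMeasurable f), ?_⟩
  have h : eLpNorm (fun x => phase a x • (f : ℝ → E) x) p volume
      = eLpNorm (f : ℝ → E) p volume :=
    eLpNorm_congr_norm_ae (Eventually.of_forall fun x => by
      rw [norm_smul, norm_phase, one_mul])
  rw [h]
  exact (Lp.memLp f).2

/-- Multiplication by the phase `e^{iax}` as a continuous linear map on `Lp`. -/
def phaseLp (p : ℝ≥0∞) [Fact (1 ≤ p)] (a : ℝ) :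
    Lp E p (volume : Measure ℝ) →L[ℂ] Lp E p (volume : Measure ℝ) :=
  LinearMap.mkContinuous
    { toFun := fun f => (memLp_phase_smul a f).toLp _
      map_add' := fun f g => by
        apply Lp.ext
        filter_upwards [MemLp.coeFn_toLp (memLp_phase_smul a (f + g)),
          MemLp.coeFn_toLp (memLp_phase_smul a f),
          MemLp.coeFn_toLp (memLp_phase_smul a g), Lp.coeFn_add f g,
          Lp.coeFn_add ((memLp_phase_smul a f).toLp _) ((memLp_phase_smul a g).toLp _)]
          with x h1 h2 h3 h4 h5
        rw [h1, h5, h4]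
        simp only [Pi.add_apply]
        rw [h2, h3, smul_add]
      map_smul' := fun c f => by
        apply Lp.ext
        filter_upwards [MemLp.coeFn_toLp (memLp_phase_smul a (c • f)),
          MemLp.coeFn_toLp (memLp_phase_smul a f), Lp.coeFn_smul c f,
          Lp.coeFn_smul c ((memLp_phase_smul a f).toLp _)] with x h1 h2 h3 h4
        simp only [RingHom.id_apply]
        rw [h1, h4, h3]
        simp only [Pi.smul_apply]
        rw [h2, smul_comm] }
    1 (fun f => by
      simp only [LinearMap.coe_mk, AddHom.coe_mk, one_mul]
      rw [Lp.norm_toLp _ (memLp_phase_smul a f), Lp.norm_def]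
      apply le_of_eq
      congr 1
      exact eLpNorm_congr_norm_ae (Eventually.of_forall fun x => by
        rw [norm_smul, norm_phase, one_mul]))

lemma coeFn_phaseLp (a : ℝ) (f : Lp E p (volume : Measure ℝ)) :
    phaseLp p a f =ᵐ[volume] fun x => phase a x • (f : ℝ → E) x :=
  MemLp.coeFn_toLp (memLp_phase_smul a f)

lemma phaseLp_comp_phaseLp (a : ℝ) :
    (phaseLp p a : Lp E p (volume : Measure ℝ) →L[ℂ] _).comp (phaseLp p (-a)) = 1 := by
  ext f
  filter_upwards [coeFn_phaseLp a (phaseLp p (-a) f),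
    coeFn_phaseLp (-a) f] with x h1 h2
  simp only [ContinuousLinearMap.comp_apply, ContinuousLinearMap.one_apply]
  rw [h1, h2, smul_smul, phase_mul a (-a) x x 0 (by ring)]
  simp

end Lp


section C0

variable {E : Type*} [NormedAddCommGroup E] [NormedSpace ℂ E]

lemma abs_phase (a x : ℝ) : ‖phase a x‖ = 1 := norm_phase a x

/-- Multiplication by the phase `e^{iax}` as a map on `C₀(ℝ, E)`. -/
def phaseC0fun (a : ℝ) (f : ZeroAtInftyContinuousMap ℝ E) : ZeroAtInftyContinuousMap ℝ E where
  toFun := fun x => phase a x • f x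
  continuous_toFun := (phase_cont a).smul f.continuous
  zero_at_infty' := by
    have h := tendsto_zero_iff_norm_tendsto_zero.1 f.zero_at_infty'
    rw [tendsto_zero_iff_norm_tendsto_zero]
    refine h.congr fun x => ?_
    rw [norm_smul, norm_phase, one_mul]
    rfl

@[simp] lemma phaseC0fun_apply (a : ℝ) (f : ZeroAtInftyContinuousMap ℝ E) (x : ℝ) :
    phaseC0fun a f x = phase a x • f x := rfl

/-- Multiplication by the phase `e^{iax}` as a continuous linear map on `C₀(ℝ, E)`. -/
def phaseC0 (a : ℝ) : ZeroAtInftyContinuousMap ℝ E →L[ℂ] ZeroAtInftyContinuousMap ℝ E :=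
  LinearMap.mkContinuous
    { toFun := phaseC0fun a
      map_add' := fun f g => by
        ext x
        simp only [phaseC0fun_apply, ZeroAtInftyContinuousMap.add_apply, smul_add]
      map_smul' := fun c f => by
        ext x
        simp only [phaseC0fun_apply, ZeroAtInftyContinuousMap.smul_apply, RingHom.id_apply]
        rw [smul_comm] }
    1 (fun f => by
      simp only [LinearMap.coe_mk, AddHom.coe_mk, one_mul]
      rw [← ZeroAtInftyContinuousMap.norm_toBCF_eq_norm,
        ← ZeroAtInftyContinuousMap.norm_toBCF_eq_norm]
      refine (BoundedContinuousFunction.norm_le (norm_nonneg _)).2 fun x => ?_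
      calc ‖(phaseC0fun a f).toBCF x‖ = ‖f x‖ := by
            show ‖phase a x • f x‖ = ‖f x‖
            rw [norm_smul, norm_phase, one_mul]
        _ ≤ ‖f.toBCF‖ := BoundedContinuousFunction.norm_coe_le_norm f.toBCF x)

lemma phaseC0_apply (a : ℝ) (f : ZeroAtInftyContinuousMap ℝ E) (x : ℝ) :
    phaseC0 a f x = phase a x • f x := rfl

lemma phaseC0_comp_phaseC0 (a : ℝ) :
    ((phaseC0 a : ZeroAtInftyContinuousMap ℝ E →L[ℂ] _) : _ →L[ℂ] _) * phaseC0 (-a) = 1 := by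
  ext f x
  simp only [ContinuousLinearMap.mul_apply, ContinuousLinearMap.one_apply, phaseC0_apply]
  rw [smul_smul, phase_mul a (-a) x x 0 (by ring)]
  simp

end C0

/-- spectrum is invariant under conjugation; smul version. -/
lemma spectrum_smul_eq {A : Type*} [Ring A] [Algebra ℂ A] (lam : ℂ) (hne : lam ≠ 0) (a : A) :
    spectrum ℂ (lam • a) = (fun z : ℂ => lam * z) '' spectrum ℂ a := by
  have h := spectrum.unit_smul_eq_smul a (Units.mk0 lam hne)
  have h1 : (Units.mk0 lam hne) • a = lam • a := rfl
  have h2 : (Units.mk0 lam hne) • spectrum ℂ a = (fun z : ℂ => lam * z) '' spectrum ℂ a := by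
    ext w
    simp [Set.mem_smul_set, Units.smul_def, smul_eq_mul]
  rw [h1, h2] at h
  exact h

lemma phase_arg_eq (t : ℝ) (ht : t ≠ 0) (lam : ℂ) (hlam : ‖lam‖ = 1) :
    phase (lam.arg / t) t = lam := by
  have hat : lam.arg / t * t = lam.arg := by field_simp
  rw [phase, hat]
  have h := Complex.norm_mul_exp_arg_mul_I lam
  rwa [show ‖lam‖ = 1 from hlam, Complex.ofReal_one, one_mul] at h

end Statement10Aux


/-- Let `{U(x,s)}_{x ≥ s}` be an evolutionary family on `E` and `t > 0`.
The spectrum of the operator `(e^{tG} f)(x) = U(x, x-t) f(x-t)` on `F = L_p(ℝ;E)`,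
`1 ≤ p < ∞`, or `F = C₀(ℝ;E)` is invariant under rotations centered at the origin:
`λ · σ(e^{tG}) = σ(e^{tG})` for every `λ ∈ 𝕋`. -/
theorem statement10
    {E : Type*} [NormedAddCommGroup E] [NormedSpace ℂ E] [CompleteSpace E]
    (U : ℝ → ℝ → E →L[ℂ] E) (hU : IsEvolutionFamily U) (t : ℝ) (ht : 0 < t) :
    (∀ (p : ℝ≥0∞) [Fact (1 ≤ p)], p ≠ ∞ →
      ∀ Tt : Lp E p (volume : Measure ℝ) →L[ℂ] Lp E p (volume : Measure ℝ),
        (∀ f : Lp E p (volume : Measure ℝ),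
          ∀ᵐ x ∂(volume : Measure ℝ), (Tt f) x = U x (x - t) (f (x - t))) →
        ∀ lam : ℂ, ‖lam‖ = 1 →
          (fun z : ℂ => lam * z) '' spectrum ℂ Tt = spectrum ℂ Tt) ∧
    (∀ Tt : ZeroAtInftyContinuousMap ℝ E →L[ℂ] ZeroAtInftyContinuousMap ℝ E,
        (∀ (f : ZeroAtInftyContinuousMap ℝ E) (x : ℝ),
          (Tt f) x = U x (x - t) (f (x - t))) →
        ∀ lam : ℂ, ‖lam‖ = 1 →
          (fun z : ℂ => lam * z) '' spectrum ℂ Tt = spectrum ℂ Tt) := by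
  classical
  constructor
  · -- The `L^p` case
    intro p _ hp Tt hTt lam hlam
    have hne : lam ≠ 0 := by
      intro h; rw [h, norm_zero] at hlam; norm_num at hlam
    set a : ℝ := lam.arg / t with ha
    have hat : Statement10Aux.phase a t = lam :=
      Statement10Aux.phase_arg_eq t ht.ne' lam hlam
    set M : Lp E p (volume : Measure ℝ) →L[ℂ] Lp E p (volume : Measure ℝ) :=
      Statement10Aux.phaseLp p a with hM
    set N : Lp E p (volume : Measure ℝ) →L[ℂ] Lp E p (volume : Measure ℝ) :=
      Statement10Aux.phaseLp p (-a) with hN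
    have hMN : M * N = 1 := Statement10Aux.phaseLp_comp_phaseLp a
    have hNM : N * M = 1 := by
      have h := Statement10Aux.phaseLp_comp_phaseLp (E := E) (p := p) (-a)
      rwa [neg_neg] at h
    have hconj : M * Tt * N = lam • Tt := by
      refine ContinuousLinearMap.ext fun f => Lp.ext ?_
      have e1 : (M * Tt * N) f = M (Tt (N f)) := rfl
      have e2 : (lam • Tt) f = lam • (Tt f) := rfl
      rw [e1, e2]
      have h3 : (fun x : ℝ => (N f : ℝ → E) (x - t)) =ᵐ[volume]
          (fun x : ℝ => Statement10Aux.phase (-a) (x - t) • (f : ℝ → E) (x - t)) :=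
        (measurePreserving_sub_right volume t).quasiMeasurePreserving.ae_eq_comp
          (Statement10Aux.coeFn_phaseLp (-a) f)
      filter_upwards [Statement10Aux.coeFn_phaseLp a (Tt (N f)), hTt (N f), h3, hTt f,
        Lp.coeFn_smul lam (Tt f)] with x h1 h2 h3 h4 h5
      rw [h1, h2, h3, (U x (x - t)).map_smul, smul_smul,
        Statement10Aux.phase_mul a (-a) x (x - t) (a * t) (by ring),
        show Complex.exp (((a * t : ℝ) : ℂ) * Complex.I) = Statement10Aux.phase a t from rfl,
        hat, h5, Pi.smul_apply, h4]
    have hcu := Statement10Aux.spectrum_conj_units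
      (⟨M, N, hMN, hNM⟩ :
        (Lp E p (volume : Measure ℝ) →L[ℂ] Lp E p (volume : Measure ℝ))ˣ) Tt
    have hcu' : spectrum ℂ (M * Tt * N) = spectrum ℂ Tt := hcu
    calc (fun z : ℂ => lam * z) '' spectrum ℂ Tt
        = spectrum ℂ (lam • Tt) := (Statement10Aux.spectrum_smul_eq lam hne Tt).symm
      _ = spectrum ℂ (M * Tt * N) := by rw [hconj]
      _ = spectrum ℂ Tt := hcu'
  · -- The `C₀` case
    intro Tt hTt lam hlam
    have hne : lam ≠ 0 := by
      intro h; rw [h, norm_zero] at hlam; norm_num at hlam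
    set a : ℝ := lam.arg / t with ha
    have hat : Statement10Aux.phase a t = lam :=
      Statement10Aux.phase_arg_eq t ht.ne' lam hlam
    set M : ZeroAtInftyContinuousMap ℝ E →L[ℂ] ZeroAtInftyContinuousMap ℝ E :=
      Statement10Aux.phaseC0 a with hM
    set N : ZeroAtInftyContinuousMap ℝ E →L[ℂ] ZeroAtInftyContinuousMap ℝ E :=
      Statement10Aux.phaseC0 (-a) with hN
    have hMN : M * N = 1 := Statement10Aux.phaseC0_comp_phaseC0 a
    have hNM : N * M = 1 := by
      have h := Statement10Aux.phaseC0_comp_phaseC0 (E := E) (-a)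
      rwa [neg_neg] at h
    have hconj : M * Tt * N = lam • Tt := by
      refine ContinuousLinearMap.ext fun f => ?_
      ext x
      have e1 : (M * Tt * N) f x = Statement10Aux.phase a x • (Tt (N f)) x := rfl
      have e2 : (lam • Tt) f x = lam • (Tt f) x := rfl
      rw [e1, e2, hTt (N f) x, Statement10Aux.phaseC0_apply, (U x (x - t)).map_smul, smul_smul,
        Statement10Aux.phase_mul a (-a) x (x - t) (a * t) (by ring),
        show Complex.exp (((a * t : ℝ) : ℂ) * Complex.I) = Statement10Aux.phase a t from rfl,
        hat, hTt f x]
    have hcu := Statement10Aux.spectrum_conj_units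
      (⟨M, N, hMN, hNM⟩ :
        (ZeroAtInftyContinuousMap ℝ E →L[ℂ] ZeroAtInftyContinuousMap ℝ E)ˣ) Tt
    have hcu' : spectrum ℂ (M * Tt * N) = spectrum ℂ Tt := hcu
    calc (fun z : ℂ => lam * z) '' spectrum ℂ Tt
        = spectrum ℂ (lam • Tt) := (Statement10Aux.spectrum_smul_eq lam hne Tt).symm
      _ = spectrum ℂ (M * Tt * N) := by rw [hconj]
      _ = spectrum ℂ Tt := hcu'
end
end

section
/- Let a : ℝ → B(E) be bounded and continuous in the strong operator topology, 1≤p<∞, and suppose b = I − aR is invertible on L_p(ℝ;E), where (aRf)(x) = a(x) f(x−1). Then for every sequence (v_n) ∈ l_p(ℤ;E): ‖(v_n)‖_{l_p(ℤ;E)} ≤ ‖b^{−1}‖_{B(L_p(ℝ;E))} · ‖( v_n − a(n) v_{n−1} )_{n∈ℤ}‖_{l_p(ℤ;E)}. -/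
open MeasureTheory Filter Topology
open scoped ENNReal

noncomputable section

section Statement16Aux

open Set

variable {E : Type*} [NormedAddCommGroup E]

/-- The "band" function: `G` on the part of each interval `[n, n+ε)`, `0` elsewhere. -/
private def s16F (ε : ℝ) (G : ℝ → E) : ℝ → E :=
  fun x => if Int.fract x < ε then G x else 0

private lemma s16_partition (g : ℝ → ℝ≥0∞) :
    ∫⁻ x, g x = ∑' n : ℤ, ∫⁻ x in Ico (n : ℝ) ((n : ℝ) + 1), g x := by
  conv_lhs => rw [← setLIntegral_univ g]
  rw [← iUnion_Ico_intCast (α := ℝ)]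
  exact lintegral_iUnion (fun n => measurableSet_Ico) (pairwise_disjoint_Ico_intCast ℝ) g

private lemma s16_floor_mem {n : ℤ} {x : ℝ} (hx : x ∈ Ico (n : ℝ) ((n : ℝ) + 1)) :
    ⌊x⌋ = n :=
  Int.floor_eq_iff.mpr ⟨hx.1, by exact_mod_cast hx.2⟩

private lemma s16_band {q : ℝ} (hq : 0 < q) (G : ℝ → E) {ε : ℝ} (hε0 : 0 < ε) (hε1 : ε ≤ 1)
    (n : ℤ) :
    ∫⁻ x in Ico (n : ℝ) ((n : ℝ) + 1), (‖s16F ε G x‖₊ : ℝ≥0∞) ^ q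
      = ∫⁻ x in Ico (n : ℝ) ((n : ℝ) + ε), (‖G x‖₊ : ℝ≥0∞) ^ q := by
  have hsub : Ico (n : ℝ) ((n : ℝ) + ε) ⊆ Ico (n : ℝ) ((n : ℝ) + 1) :=
    Ico_subset_Ico_right (by linarith)
  rw [← lintegral_indicator measurableSet_Ico, ← lintegral_indicator measurableSet_Ico]
  refine lintegral_congr fun x => ?_
  by_cases hx1 : x ∈ Ico (n : ℝ) ((n : ℝ) + 1)
  · have hfl : ⌊x⌋ = n := s16_floor_mem hx1
    have hfr : Int.fract x = x - n := by rw [← Int.self_sub_floor, hfl]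
    rw [indicator_of_mem hx1]
    by_cases hxε : x ∈ Ico (n : ℝ) ((n : ℝ) + ε)
    · rw [indicator_of_mem hxε, s16F, if_pos (by rw [hfr]; linarith [hxε.2])]
    · have hni : ¬ Int.fract x < ε := by
        rw [hfr]
        intro h
        exact hxε ⟨hx1.1, by linarith⟩
      rw [indicator_of_notMem hxε, s16F, if_neg hni]
      simp [ENNReal.zero_rpow_of_pos hq]
  · rw [indicator_of_notMem hx1, indicator_of_notMem fun hxε => hx1 (hsub hxε)]

private lemma s16_int {q : ℝ} (hq : 0 < q) (G : ℝ → E) {ε : ℝ} (hε0 : 0 < ε) (hε1 : ε ≤ 1) :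
    ∫⁻ x, (‖s16F ε G x‖₊ : ℝ≥0∞) ^ q
      = ∑' n : ℤ, ∫⁻ x in Ico (n : ℝ) ((n : ℝ) + ε), (‖G x‖₊ : ℝ≥0∞) ^ q := by
  rw [s16_partition]
  exact tsum_congr fun n => s16_band hq G hε0 hε1 n

private lemma s16_sm (ε : ℝ) (u : ℤ → E) : StronglyMeasurable (s16F ε fun x : ℝ => u ⌊x⌋) := by
  have h1 : StronglyMeasurable fun x : ℝ => u ⌊x⌋ :=
    (continuous_of_discreteTopology (f := u)).comp_stronglyMeasurable
      Int.measurable_floor.stronglyMeasurable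
  exact StronglyMeasurable.ite (measurableSet_lt measurable_fract measurable_const) h1
    stronglyMeasurable_const

private lemma s16_step_int {q : ℝ} (hq : 0 < q) (u : ℤ → E) {ε : ℝ} (hε0 : 0 < ε)
    (hε1 : ε ≤ 1) :
    ∫⁻ x : ℝ, (‖s16F ε (fun y : ℝ => u ⌊y⌋) x‖₊ : ℝ≥0∞) ^ q
      = ENNReal.ofReal ε * ∑' n : ℤ, ENNReal.ofReal (‖u n‖ ^ q) := by
  rw [s16_int hq _ hε0 hε1, ← ENNReal.tsum_mul_left]
  refine tsum_congr fun n => ?_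
  have hcongr : ∫⁻ x in Ico (n : ℝ) ((n : ℝ) + ε), (‖u ⌊x⌋‖₊ : ℝ≥0∞) ^ q
      = ∫⁻ _ in Ico (n : ℝ) ((n : ℝ) + ε), ENNReal.ofReal (‖u n‖ ^ q) := by
    refine setLIntegral_congr_fun measurableSet_Ico (fun x hx => ?_)
    have hfl : ⌊x⌋ = n := s16_floor_mem ⟨hx.1, lt_of_lt_of_le hx.2 (by linarith)⟩
    rw [hfl, ← enorm_eq_nnnorm, ← ofReal_norm,
      ENNReal.ofReal_rpow_of_nonneg (norm_nonneg _) hq.le]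
  rw [hcongr, setLIntegral_const, Real.volume_Ico, add_sub_cancel_left, mul_comm]

end Statement16Aux

section Statement16Aux2

open Set

variable {E : Type*} [NormedAddCommGroup E] [NormedSpace ℂ E]

private lemma s16_eLpNorm_step {p : ℝ≥0∞} [Fact (1 ≤ p)] (hp : p ≠ ∞)
    (u : lp (fun _ : ℤ => E) p) {ε : ℝ} (hε0 : 0 < ε) (hε1 : ε ≤ 1) :
    eLpNorm (s16F ε fun x : ℝ => u ⌊x⌋) p (volume : Measure ℝ)
      = ENNReal.ofReal (ε ^ (p.toReal)⁻¹ * ‖u‖) := by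
  have hp1 : (1 : ℝ≥0∞) ≤ p := Fact.out
  have hp0 : p ≠ 0 := (lt_of_lt_of_le zero_lt_one hp1).ne'
  have hq : 0 < p.toReal := ENNReal.toReal_pos hp0 hp
  have hu0 : (0 : ℝ) ≤ ‖u‖ := norm_nonneg _
  rw [eLpNorm_eq_lintegral_rpow_enorm_toReal hp0 hp]
  simp only [enorm_eq_nnnorm]
  rw [s16_step_int hq _ hε0 hε1]
  have hsum : ∑' n : ℤ, ENNReal.ofReal (‖u n‖ ^ p.toReal)
      = ENNReal.ofReal (‖u‖ ^ p.toReal) := by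
    rw [← ENNReal.ofReal_tsum_of_nonneg (fun n => Real.rpow_nonneg (norm_nonneg _) _)
      ((lp.memℓp u).summable hq), lp.norm_rpow_eq_tsum hq]
  rw [hsum, ← ENNReal.ofReal_mul hε0.le,
    ENNReal.ofReal_rpow_of_nonneg (by positivity) (by positivity), one_div,
    Real.mul_rpow hε0.le (Real.rpow_nonneg hu0 _), Real.rpow_rpow_inv hu0 hq.ne']

private lemma s16_I_le {c : ℝ} (a : ℝ → E →L[ℂ] E) (hc : ∀ x : ℝ, ‖a x‖ ≤ c)
    {q : ℝ} (hq : 0 < q) {ε : ℝ} (hε0 : 0 < ε) (e : E) (n : ℤ) :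
    ∫⁻ x in Ico (n : ℝ) ((n : ℝ) + ε), (‖a (n : ℝ) e - a x e‖₊ : ℝ≥0∞) ^ q
      ≤ ENNReal.ofReal ε * ENNReal.ofReal ((2 * c) ^ q * ‖e‖ ^ q) := by
  have hc0 : (0 : ℝ) ≤ c := le_trans (norm_nonneg _) (hc 0)
  have hbd : ∀ x : ℝ, (‖a (n : ℝ) e - a x e‖₊ : ℝ≥0∞) ^ q
      ≤ ENNReal.ofReal ((2 * c) ^ q * ‖e‖ ^ q) := by
    intro x
    rw [← enorm_eq_nnnorm, ← ofReal_norm, ENNReal.ofReal_rpow_of_nonneg (norm_nonneg _) hq.le]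
    refine ENNReal.ofReal_le_ofReal ?_
    rw [← Real.mul_rpow (by positivity) (norm_nonneg _)]
    refine Real.rpow_le_rpow (norm_nonneg _) ?_ hq.le
    calc ‖a (n : ℝ) e - a x e‖ ≤ ‖a (n : ℝ) e‖ + ‖a x e‖ := norm_sub_le _ _
      _ ≤ c * ‖e‖ + c * ‖e‖ := by
          gcongr
          · exact le_trans ((a (n : ℝ)).le_opNorm e) (by gcongr; exact hc _)
          · exact le_trans ((a x).le_opNorm e) (by gcongr; exact hc _)
      _ = 2 * c * ‖e‖ := by ring
  calc ∫⁻ x in Ico (n : ℝ) ((n : ℝ) + ε), (‖a (n : ℝ) e - a x e‖₊ : ℝ≥0∞) ^ q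
      ≤ ∫⁻ _ in Ico (n : ℝ) ((n : ℝ) + ε), ENNReal.ofReal ((2 * c) ^ q * ‖e‖ ^ q) :=
        setLIntegral_mono measurable_const fun x _ => hbd x
    _ = ENNReal.ofReal ε * ENNReal.ofReal ((2 * c) ^ q * ‖e‖ ^ q) := by
        rw [setLIntegral_const, Real.volume_Ico, add_sub_cancel_left, mul_comm]

private lemma s16_t_le {c : ℝ} (a : ℝ → E →L[ℂ] E) (hc : ∀ x : ℝ, ‖a x‖ ≤ c)
    {q : ℝ} (hq : 0 < q) {ε : ℝ} (hε0 : 0 < ε) (e : E) (n : ℤ) :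
    ((ENNReal.ofReal ε)⁻¹
        * ∫⁻ x in Ico (n : ℝ) ((n : ℝ) + ε), (‖a (n : ℝ) e - a x e‖₊ : ℝ≥0∞) ^ q).toReal
      ≤ (2 * c) ^ q * ‖e‖ ^ q := by
  have hc0 : (0 : ℝ) ≤ c := le_trans (norm_nonneg _) (hc 0)
  have hne : ENNReal.ofReal ε ≠ 0 := (ENNReal.ofReal_pos.mpr hε0).ne'
  have h1 : (ENNReal.ofReal ε)⁻¹
        * ∫⁻ x in Ico (n : ℝ) ((n : ℝ) + ε), (‖a (n : ℝ) e - a x e‖₊ : ℝ≥0∞) ^ q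
      ≤ ENNReal.ofReal ((2 * c) ^ q * ‖e‖ ^ q) := by
    calc (ENNReal.ofReal ε)⁻¹
        * ∫⁻ x in Ico (n : ℝ) ((n : ℝ) + ε), (‖a (n : ℝ) e - a x e‖₊ : ℝ≥0∞) ^ q
        ≤ (ENNReal.ofReal ε)⁻¹
            * (ENNReal.ofReal ε * ENNReal.ofReal ((2 * c) ^ q * ‖e‖ ^ q)) :=
          mul_le_mul_right (s16_I_le a hc hq hε0 e n) _
      _ = ENNReal.ofReal ((2 * c) ^ q * ‖e‖ ^ q) := by
          rw [← mul_assoc, ENNReal.inv_mul_cancel hne ENNReal.ofReal_ne_top, one_mul]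
  calc ((ENNReal.ofReal ε)⁻¹
        * ∫⁻ x in Ico (n : ℝ) ((n : ℝ) + ε), (‖a (n : ℝ) e - a x e‖₊ : ℝ≥0∞) ^ q).toReal
      ≤ (ENNReal.ofReal ((2 * c) ^ q * ‖e‖ ^ q)).toReal :=
        ENNReal.toReal_mono ENNReal.ofReal_ne_top h1
    _ ≤ (2 * c) ^ q * ‖e‖ ^ q := le_of_eq (ENNReal.toReal_ofReal
        (mul_nonneg (Real.rpow_nonneg (by linarith) _) (Real.rpow_nonneg (norm_nonneg _) _)))

private lemma s16_main {E : Type*} [NormedAddCommGroup E] [NormedSpace ℂ E] [CompleteSpace E]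
    (a : ℝ → E →L[ℂ] E) {c : ℝ} (hc : ∀ x : ℝ, ‖a x‖ ≤ c)
    {p : ℝ≥0∞} [Fact (1 ≤ p)] (hp : p ≠ ∞)
    (AR : Lp E p (volume : Measure ℝ) →L[ℂ] Lp E p (volume : Measure ℝ))
    (hAR : ∀ f : Lp E p (volume : Measure ℝ),
      ∀ᵐ x ∂(volume : Measure ℝ), (AR f) x = a x (f (x - 1)))
    (hb : IsUnit ((1 : Lp E p (volume : Measure ℝ) →L[ℂ] Lp E p (volume : Measure ℝ)) - AR))
    (v w : lp (fun _ : ℤ => E) p)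
    (hw : ∀ n : ℤ, w n = v n - a (n : ℝ) (v (n - 1)))
    {ε : ℝ} (hε0 : 0 < ε) (hε1 : ε ≤ 1) :
    ‖v‖ ≤ ‖Ring.inverse ((1 : Lp E p (volume : Measure ℝ) →L[ℂ]
          Lp E p (volume : Measure ℝ)) - AR)‖ * ‖w‖
      + ‖Ring.inverse ((1 : Lp E p (volume : Measure ℝ) →L[ℂ]
          Lp E p (volume : Measure ℝ)) - AR)‖
        * (∑' n : ℤ, ((ENNReal.ofReal ε)⁻¹ * ∫⁻ x in Ico (n : ℝ) ((n : ℝ) + ε),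
            (‖a (n : ℝ) (v (n - 1)) - a x (v (n - 1))‖₊ : ℝ≥0∞) ^ p.toReal).toReal)
          ^ (p.toReal)⁻¹ := by
  classical
  have hp1 : (1 : ℝ≥0∞) ≤ p := Fact.out
  have hp0 : p ≠ 0 := (lt_of_lt_of_le zero_lt_one hp1).ne'
  set q : ℝ := p.toReal with hqdef
  have hq : 0 < q := ENNReal.toReal_pos hp0 hp
  have hc0 : (0 : ℝ) ≤ c := le_trans (norm_nonneg _) (hc 0)
  set b : Lp E p (volume : Measure ℝ) →L[ℂ] Lp E p (volume : Measure ℝ) :=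
    (1 : Lp E p (volume : Measure ℝ) →L[ℂ] Lp E p (volume : Measure ℝ)) - AR with hbdef
  set K : ℝ := ‖Ring.inverse b‖ with hKdef
  have hK0 : 0 ≤ K := norm_nonneg _
  -- abbreviations
  set I : ℤ → ℝ≥0∞ := fun n => ∫⁻ x in Ico (n : ℝ) ((n : ℝ) + ε),
    (‖a (n : ℝ) (v (n - 1)) - a x (v (n - 1))‖₊ : ℝ≥0∞) ^ q with hIdef
  set T : ℝ := ∑' n : ℤ, ((ENNReal.ofReal ε)⁻¹ * I n).toReal with hTdef
  have hT0 : 0 ≤ T := tsum_nonneg fun n => ENNReal.toReal_nonneg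
  -- the step functions
  set Fv : ℝ → E := s16F ε fun x : ℝ => v ⌊x⌋ with hFvdef
  set Fw : ℝ → E := s16F ε fun x : ℝ => w ⌊x⌋ with hFwdef
  set r : ℝ → E := s16F ε fun x : ℝ =>
    a ((⌊x⌋ : ℤ) : ℝ) (v (⌊x⌋ - 1)) - a x (v (⌊x⌋ - 1)) with hrdef
  -- summability of the dominating sequence
  have hsv : Summable fun n : ℤ => ‖v n‖ ^ q := (lp.memℓp v).summable hq
  have hsv' : Summable fun n : ℤ => ‖v (n - 1)‖ ^ q := by
    have h := (Equiv.subRight (1 : ℤ)).summable_iff.mpr hsv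
    simpa [Function.comp_def] using h
  have hsB : Summable fun n : ℤ => (2 * c) ^ q * ‖v (n - 1)‖ ^ q := hsv'.mul_left _
  -- Memℒp of the step functions
  have hmemv : MemLp Fv p (volume : Measure ℝ) := by
    refine ⟨(s16_sm ε _).aestronglyMeasurable, ?_⟩
    rw [hFvdef, s16_eLpNorm_step hp v hε0 hε1]
    exact ENNReal.ofReal_lt_top
  have haesmw : AEStronglyMeasurable Fw (volume : Measure ℝ) :=
    (s16_sm ε _).aestronglyMeasurable
  set f : Lp E p (volume : Measure ℝ) := hmemv.toLp Fv with hfdef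
  have hnf : ‖f‖ = ε ^ q⁻¹ * ‖v‖ := by
    rw [hfdef, Lp.norm_toLp, hFvdef, s16_eLpNorm_step hp v hε0 hε1,
      ENNReal.toReal_ofReal (by positivity)]
  -- the pointwise identity
  have hptwise : ∀ x : ℝ, Fv x - a x (Fv (x - 1)) = Fw x + r x := by
    intro x
    have h1 : Int.fract (x - 1) = Int.fract x := by
      simpa using Int.fract_sub_intCast x (1 : ℤ)
    have h2 : ⌊x - 1⌋ = ⌊x⌋ - 1 := by
      simpa using Int.floor_sub_int x (1 : ℤ)
    by_cases hx : Int.fract x < ε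
    · have e1 : Fv x = v ⌊x⌋ := if_pos hx
      have e2 : Fv (x - 1) = v (⌊x⌋ - 1) := by
        show (if Int.fract (x - 1) < ε then v ⌊x - 1⌋ else 0) = v (⌊x⌋ - 1)
        rw [h1, h2, if_pos hx]
      have e3 : Fw x = v ⌊x⌋ - a ((⌊x⌋ : ℤ) : ℝ) (v (⌊x⌋ - 1)) := by
        show (if Int.fract x < ε then w ⌊x⌋ else 0) = _
        rw [if_pos hx, hw ⌊x⌋]
      have e4 : r x = a ((⌊x⌋ : ℤ) : ℝ) (v (⌊x⌋ - 1)) - a x (v (⌊x⌋ - 1)) := if_pos hx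
      rw [e1, e2, e3, e4]
      abel
    · have e1 : Fv x = 0 := if_neg hx
      have e2 : Fv (x - 1) = 0 := by
        show (if Int.fract (x - 1) < ε then v ⌊x - 1⌋ else 0) = 0
        rw [h1, if_neg hx]
      have e3 : Fw x = 0 := if_neg hx
      have e4 : r x = 0 := if_neg hx
      rw [e1, e2, e3, e4, map_zero]
      abel
  -- a.e. description of b f
  have hbf : (⇑(b f) : ℝ → E) =ᵐ[volume] Fw + r := by
    have hsub : (⇑(b f) : ℝ → E) =ᵐ[volume] fun x => f x - (AR f) x := by
      have : b f = f - AR f := by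
        rw [hbdef]
        simp [ContinuousLinearMap.sub_apply, ContinuousLinearMap.one_apply]
      rw [this]
      filter_upwards [Lp.coeFn_sub f (AR f)] with x hx
      simpa using hx
    have hfv : (⇑f : ℝ → E) =ᵐ[volume] Fv := hmemv.coeFn_toLp
    have hshift : ((⇑f : ℝ → E) ∘ fun x : ℝ => x - 1) =ᵐ[volume]
        (Fv ∘ fun x : ℝ => x - 1) :=
      ((measurePreserving_sub_right (volume : Measure ℝ)
        (1 : ℝ)).quasiMeasurePreserving).ae_eq_comp hfv
    filter_upwards [hsub, hfv, hshift, hAR f] with x h1 h2 h3 h4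
    have h3' : f (x - 1) = Fv (x - 1) := h3
    rw [h1, h4, h2, h3', hptwise x]
    rfl
  -- measurability of r
  have haesmr : AEStronglyMeasurable r (volume : Measure ℝ) := by
    refine ((Lp.aestronglyMeasurable (b f)).sub haesmw).congr ?_
    filter_upwards [hbf] with x hx
    have : (b f) x = Fw x + r x := hx
    simp [this]
  -- the remainder integral and its decomposition
  set R : ℝ≥0∞ := ∫⁻ x, (‖r x‖₊ : ℝ≥0∞) ^ q with hRdef
  have hRsum : R = ∑' n : ℤ, I n := by
    rw [hRdef, hrdef, s16_int hq _ hε0 hε1]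
    refine tsum_congr fun n => ?_
    refine setLIntegral_congr_fun measurableSet_Ico
      (fun x hx => ?_)
    have hfl : ⌊x⌋ = n := s16_floor_mem ⟨hx.1, lt_of_lt_of_le hx.2 (by linarith)⟩
    rw [hfl]
  have hIle : ∀ n : ℤ, I n ≤ ENNReal.ofReal ε
      * ENNReal.ofReal ((2 * c) ^ q * ‖v (n - 1)‖ ^ q) :=
    fun n => s16_I_le a hc hq hε0 (v (n - 1)) n
  have hIfin : ∀ n : ℤ, I n ≠ ∞ := fun n =>
    (lt_of_le_of_lt (hIle n)
      (ENNReal.mul_lt_top ENNReal.ofReal_lt_top ENNReal.ofReal_lt_top)).ne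
  have hRfin : R ≠ ∞ := by
    rw [hRsum]
    refine (lt_of_le_of_lt (ENNReal.tsum_le_tsum hIle) ?_).ne
    rw [ENNReal.tsum_mul_left,
      ← ENNReal.ofReal_tsum_of_nonneg (fun n => by positivity) hsB]
    exact ENNReal.mul_lt_top ENNReal.ofReal_lt_top ENNReal.ofReal_lt_top
  -- norm of b f
  have heLpr : eLpNorm r p (volume : Measure ℝ) = R ^ (1 / q) := by
    rw [eLpNorm_eq_lintegral_rpow_enorm_toReal hp0 hp, hRdef]
    rfl
  have heLpw : eLpNorm Fw p (volume : Measure ℝ) = ENNReal.ofReal (ε ^ q⁻¹ * ‖w‖) := by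
    rw [hFwdef, s16_eLpNorm_step hp w hε0 hε1]
  have hbf_norm : ‖b f‖ ≤ ε ^ q⁻¹ * ‖w‖ + (R ^ (1 / q)).toReal := by
    rw [Lp.norm_def, eLpNorm_congr_ae hbf]
    have htri : eLpNorm (Fw + r) p (volume : Measure ℝ)
        ≤ ENNReal.ofReal (ε ^ q⁻¹ * ‖w‖) + R ^ (1 / q) := by
      rw [← heLpw, ← heLpr]
      exact eLpNorm_add_le haesmw haesmr hp1
    have hfin2 : R ^ (1 / q) ≠ ∞ := ENNReal.rpow_ne_top_of_nonneg (by positivity) hRfin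
    calc (eLpNorm (Fw + r) p (volume : Measure ℝ)).toReal
        ≤ (ENNReal.ofReal (ε ^ q⁻¹ * ‖w‖) + R ^ (1 / q)).toReal :=
          ENNReal.toReal_mono (by
            exact ENNReal.add_ne_top.mpr ⟨ENNReal.ofReal_ne_top, hfin2⟩) htri
      _ = ε ^ q⁻¹ * ‖w‖ + (R ^ (1 / q)).toReal := by
          rw [ENNReal.toReal_add ENNReal.ofReal_ne_top hfin2,
            ENNReal.toReal_ofReal (by positivity)]
  -- the operator inequality
  have hinv : ‖f‖ ≤ K * ‖b f‖ := by
    have h1 : (Ring.inverse b) (b f) = f := by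
      rw [← ContinuousLinearMap.mul_apply, Ring.inverse_mul_cancel b hb,
        ContinuousLinearMap.one_apply]
    calc ‖f‖ = ‖(Ring.inverse b) (b f)‖ := by rw [h1]
      _ ≤ K * ‖b f‖ := (Ring.inverse b).le_opNorm (b f)
  -- bound the remainder by T
  have hrT : (R ^ (1 / q)).toReal ≤ ε ^ q⁻¹ * T ^ q⁻¹ := by
    have hne : ENNReal.ofReal ε ≠ 0 := (ENNReal.ofReal_pos.mpr hε0).ne'
    set D : ℝ≥0∞ := (ENNReal.ofReal ε)⁻¹ * R with hDdef
    have hDsum : D = ∑' n : ℤ, (ENNReal.ofReal ε)⁻¹ * I n := by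
      rw [hDdef, hRsum, ENNReal.tsum_mul_left]
    have hufin : ∀ n : ℤ, (ENNReal.ofReal ε)⁻¹ * I n ≠ ∞ :=
      fun n => ENNReal.mul_ne_top (ENNReal.inv_ne_top.mpr hne) (hIfin n)
    have hsummt : Summable fun n : ℤ => ((ENNReal.ofReal ε)⁻¹ * I n).toReal := by
      refine Summable.of_nonneg_of_le (fun n => ENNReal.toReal_nonneg)
        (fun n => ?_) hsB
      exact s16_t_le a hc hq hε0 (v (n - 1)) n
    have hDT : D = ENNReal.ofReal T := by
      rw [hDsum, hTdef,
        ENNReal.ofReal_tsum_of_nonneg (fun n => ENNReal.toReal_nonneg) hsummt]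
      exact tsum_congr fun n => (ENNReal.ofReal_toReal (hufin n)).symm
    have hRD : R = ENNReal.ofReal ε * D := by
      rw [hDdef, ← mul_assoc, ENNReal.mul_inv_cancel hne ENNReal.ofReal_ne_top, one_mul]
    have hRto : R.toReal = ε * T := by
      rw [hRD, hDT, ENNReal.toReal_mul, ENNReal.toReal_ofReal hε0.le,
        ENNReal.toReal_ofReal hT0]
    rw [← ENNReal.toReal_rpow, hRto, one_div,
      ← Real.mul_rpow hε0.le hT0]
  -- put it together
  have hmain : ε ^ q⁻¹ * ‖v‖ ≤ ε ^ q⁻¹ * (K * ‖w‖ + K * T ^ q⁻¹) := by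
    calc ε ^ q⁻¹ * ‖v‖ = ‖f‖ := hnf.symm
      _ ≤ K * ‖b f‖ := hinv
      _ ≤ K * (ε ^ q⁻¹ * ‖w‖ + (R ^ (1 / q)).toReal) := by
          exact mul_le_mul_of_nonneg_left hbf_norm hK0
      _ ≤ K * (ε ^ q⁻¹ * ‖w‖ + ε ^ q⁻¹ * T ^ q⁻¹) := by
          exact mul_le_mul_of_nonneg_left (by linarith [hrT]) hK0
      _ = ε ^ q⁻¹ * (K * ‖w‖ + K * T ^ q⁻¹) := by ring
  have hεq : (0 : ℝ) < ε ^ q⁻¹ := Real.rpow_pos_of_pos hε0 _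
  have := (mul_le_mul_iff_right₀ hεq).mp hmain
  exact this

end Statement16Aux2


/-- Let `a : ℝ → B(E)` be bounded and strongly continuous,
`1 ≤ p < ∞`, and suppose `b = I - aR` is invertible on `L_p(ℝ;E)`, where
`(aRf)(x) = a(x) f(x-1)`. Then for every `(v_n) ∈ l_p(ℤ;E)`:
`‖(v_n)‖ ≤ ‖b⁻¹‖ · ‖(v_n - a(n) v_{n-1})_n‖`. -/
theorem statement16
    {E : Type*} [NormedAddCommGroup E] [NormedSpace ℂ E] [CompleteSpace E]
    (a : ℝ → E →L[ℂ] E) (habd : ∃ c : ℝ, ∀ x : ℝ, ‖a x‖ ≤ c)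
    (hacont : ∀ v : E, Continuous fun x : ℝ => a x v)
    (p : ℝ≥0∞) [Fact (1 ≤ p)] (hp : p ≠ ∞)
    (AR : Lp E p (volume : Measure ℝ) →L[ℂ] Lp E p (volume : Measure ℝ))
    (hAR : ∀ f : Lp E p (volume : Measure ℝ),
      ∀ᵐ x ∂(volume : Measure ℝ), (AR f) x = a x (f (x - 1)))
    (hb : IsUnit ((1 : Lp E p (volume : Measure ℝ) →L[ℂ] Lp E p (volume : Measure ℝ))
      - AR)) :
    ∀ v w : lp (fun _ : ℤ => E) p,
      (∀ n : ℤ, w n = v n - a (n : ℝ) (v (n - 1))) →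
      ‖v‖ ≤ ‖Ring.inverse ((1 : Lp E p (volume : Measure ℝ) →L[ℂ]
        Lp E p (volume : Measure ℝ)) - AR)‖ * ‖w‖ := by
  intro v w hw
  have hp1 : (1 : ℝ≥0∞) ≤ p := Fact.out
  have hp0 : p ≠ 0 := (lt_of_lt_of_le zero_lt_one hp1).ne'
  have hq : 0 < p.toReal := ENNReal.toReal_pos hp0 hp
  obtain ⟨c₀, hc₀⟩ := habd
  set c : ℝ := max c₀ 0 with hcdef
  have hc : ∀ x : ℝ, ‖a x‖ ≤ c := fun x => (hc₀ x).trans (le_max_left _ _)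
  have hc0 : (0 : ℝ) ≤ c := le_max_right _ _
  set K : ℝ := ‖Ring.inverse ((1 : Lp E p (volume : Measure ℝ) →L[ℂ]
    Lp E p (volume : Measure ℝ)) - AR)‖ with hKdef
  -- the sequence of widths
  set εk : ℕ → ℝ := fun k => ((k : ℝ) + 1)⁻¹ with hεkdef
  have hεk0 : ∀ k, 0 < εk k := fun k => by positivity
  have hεk1 : ∀ k, εk k ≤ 1 := by
    intro k
    rw [hεkdef]
    have h1 : (1 : ℝ) ≤ (k : ℝ) + 1 := by
      have := Nat.cast_nonneg (α := ℝ) k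
      linarith
    calc ((k : ℝ) + 1)⁻¹ ≤ 1⁻¹ := by
          exact inv_anti₀ one_pos h1
      _ = 1 := inv_one
  have hεktend : Filter.Tendsto εk atTop (𝓝 0) := by
    have := tendsto_one_div_add_atTop_nhds_zero_nat (𝕜 := ℝ)
    simpa [hεkdef, one_div] using this
  -- the error terms
  set t : ℕ → ℤ → ℝ := fun k n => ((ENNReal.ofReal (εk k))⁻¹
    * ∫⁻ x in Set.Ico (n : ℝ) ((n : ℝ) + εk k),
        (‖a (n : ℝ) (v (n - 1)) - a x (v (n - 1))‖₊ : ℝ≥0∞) ^ p.toReal).toReal with htdef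
  have key : ∀ k : ℕ, ‖v‖ ≤ K * ‖w‖ + K * (∑' n : ℤ, t k n) ^ (p.toReal)⁻¹ := fun k =>
    s16_main a hc hp AR hAR hb v w hw (hεk0 k) (hεk1 k)
  -- summability of the dominating sequence
  have hsv : Summable fun n : ℤ => ‖v n‖ ^ p.toReal := (lp.memℓp v).summable hq
  have hsv' : Summable fun n : ℤ => ‖v (n - 1)‖ ^ p.toReal := by
    have h := (Equiv.subRight (1 : ℤ)).summable_iff.mpr hsv
    simpa [Function.comp_def] using h
  have hsB : Summable fun n : ℤ => (2 * c) ^ p.toReal * ‖v (n - 1)‖ ^ p.toReal :=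
    hsv'.mul_left _
  have hbound : ∀ k : ℕ, ∀ n : ℤ,
      ‖t k n‖ ≤ (2 * c) ^ p.toReal * ‖v (n - 1)‖ ^ p.toReal := by
    intro k n
    rw [Real.norm_eq_abs, abs_of_nonneg ENNReal.toReal_nonneg]
    exact s16_t_le a hc hq (hεk0 k) (v (n - 1)) n
  -- each error term tends to zero
  have hterm : ∀ n : ℤ, Filter.Tendsto (fun k => t k n) atTop (𝓝 0) := by
    intro n
    rw [tendsto_order]
    constructor
    · intro x hx
      exact Filter.Eventually.of_forall fun k => lt_of_lt_of_le hx ENNReal.toReal_nonneg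
    · intro δ hδ
      have hδ2 : 0 < δ / 2 := by linarith
      have hcontphi : ContinuousAt
          (fun x : ℝ => ‖a (n : ℝ) (v (n - 1)) - a x (v (n - 1))‖ ^ p.toReal) (n : ℝ) :=
        (((continuous_const.sub (hacont (v (n - 1)))).norm).rpow_const
          (fun x => Or.inr hq.le)).continuousAt
      obtain ⟨η, hη0, hη⟩ := Metric.continuousAt_iff.mp hcontphi (δ / 2) hδ2
      have hev : ∀ᶠ k : ℕ in atTop, εk k < η := hεktend.eventually_lt_const hη0
      filter_upwards [hev] with k hk
      have hIb : (∫⁻ x in Set.Ico (n : ℝ) ((n : ℝ) + εk k),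
          (‖a (n : ℝ) (v (n - 1)) - a x (v (n - 1))‖₊ : ℝ≥0∞) ^ p.toReal)
          ≤ ENNReal.ofReal (δ / 2) * ENNReal.ofReal (εk k) := by
        have hmono : ∀ x ∈ Set.Ico (n : ℝ) ((n : ℝ) + εk k),
            (‖a (n : ℝ) (v (n - 1)) - a x (v (n - 1))‖₊ : ℝ≥0∞) ^ p.toReal
              ≤ ENNReal.ofReal (δ / 2) := by
          intro x hx
          have hdist : dist x (n : ℝ) < η := by
            rw [Real.dist_eq, abs_of_nonneg (by linarith [hx.1])]
            have h2 := hx.2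
            linarith [hk]
          have h5 := hη hdist
          have hφx : ‖a (n : ℝ) (v (n - 1)) - a x (v (n - 1))‖ ^ p.toReal < δ / 2 := by
            have hval : ‖a (n : ℝ) (v (n - 1)) - a (n : ℝ) (v (n - 1))‖ ^ p.toReal
                = 0 := by
              simp [Real.zero_rpow hq.ne']
            rw [Real.dist_eq] at h5
            simp only [hval, sub_zero] at h5
            rwa [abs_of_nonneg (Real.rpow_nonneg (norm_nonneg _) _)] at h5
          rw [← enorm_eq_nnnorm, ← ofReal_norm,
            ENNReal.ofReal_rpow_of_nonneg (norm_nonneg _) hq.le]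
          exact ENNReal.ofReal_le_ofReal hφx.le
        refine le_trans (setLIntegral_mono measurable_const hmono) ?_
        rw [setLIntegral_const, Real.volume_Ico, add_sub_cancel_left]
      have hne : ENNReal.ofReal (εk k) ≠ 0 := (ENNReal.ofReal_pos.mpr (hεk0 k)).ne'
      have ht2 : t k n ≤ δ / 2 := by
        calc t k n ≤ ((ENNReal.ofReal (εk k))⁻¹
              * (ENNReal.ofReal (δ / 2) * ENNReal.ofReal (εk k))).toReal := by
              refine ENNReal.toReal_mono ?_ (mul_le_mul_right hIb _)
              exact ENNReal.mul_ne_top (ENNReal.inv_ne_top.mpr hne)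
                (ENNReal.mul_ne_top ENNReal.ofReal_ne_top ENNReal.ofReal_ne_top)
          _ = δ / 2 := by
              rw [mul_comm (ENNReal.ofReal (δ / 2)), ← mul_assoc,
                ENNReal.inv_mul_cancel hne ENNReal.ofReal_ne_top, one_mul,
                ENNReal.toReal_ofReal hδ2.le]
      linarith
  -- dominated convergence for the series of error terms
  have hdct : Filter.Tendsto (fun k => ∑' n : ℤ, t k n) atTop (𝓝 0) := by
    have h := tendsto_tsum_of_dominated_convergence (𝓕 := atTop) (f := t)
      (g := fun _ : ℤ => (0 : ℝ)) hsB hterm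
      (Filter.Eventually.of_forall hbound)
    simpa using h
  have hrt : Filter.Tendsto (fun k => (∑' n : ℤ, t k n) ^ (p.toReal)⁻¹) atTop (𝓝 0) := by
    have h0 : (0 : ℝ) ^ (p.toReal)⁻¹ = 0 := Real.zero_rpow (inv_ne_zero hq.ne')
    have h := hdct.rpow_const (p := (p.toReal)⁻¹) (Or.inr (by positivity))
    rwa [h0] at h
  have hfinal : Filter.Tendsto (fun k => K * ‖w‖ + K * (∑' n : ℤ, t k n) ^ (p.toReal)⁻¹)
      atTop (𝓝 (K * ‖w‖ + K * 0)) :=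
    tendsto_const_nhds.add (hrt.const_mul K)
  have h := ge_of_tendsto hfinal (Filter.Eventually.of_forall key)
  rw [hKdef] at h
  simpa using h
end
end

section
/- Let {U(x,s)}_{x≥s} be an evolutionary family on E, a(x) = U(x,x−1), 1≤p<∞. If the operator b = I − aR, (bf)(x) = f(x) − U(x,x−1) f(x−1), is invertible on L_p(ℝ;E), then the operator I − π_0(a)S, (v_n) ↦ (v_n − U(n,n−1) v_{n−1}), maps l_p(ℤ;E) onto l_p(ℤ;E). -/
open MeasureTheory Filter Topology
open scoped ENNReal

noncomputable section

lemma aux_contOn {E : Type*} [NormedAddCommGroup E] [NormedSpace ℂ E] (V : ℝ → ℝ → E →L[ℂ] E)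
    (hc : ∀ v : E, ContinuousOn (fun q : ℝ × ℝ => V q.1 q.2 v) {q : ℝ × ℝ | q.2 ≤ q.1})
    (T : ℝ) (v : E) : ContinuousOn (fun x => V T x v) (Set.Iic T) := by
  have := (hc v).comp (f := fun x : ℝ => ((T, x) : ℝ × ℝ))
    (continuous_const.prodMk continuous_id).continuousOn
    (fun x (hx : x ∈ Set.Iic T) => hx)
  exact this

lemma aux_contOn' {E : Type*} [NormedAddCommGroup E] [NormedSpace ℂ E] (V : ℝ → ℝ → E →L[ℂ] E)
    (hc : ∀ v : E, ContinuousOn (fun q : ℝ × ℝ => V q.1 q.2 v) {q : ℝ × ℝ | q.2 ≤ q.1})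
    (s : ℝ) (v : E) : ContinuousOn (fun x => V x s v) (Set.Ici s) := by
  have := (hc v).comp (f := fun x : ℝ => ((x, s) : ℝ × ℝ))
    (continuous_id.prodMk continuous_const).continuousOn
    (fun x (hx : x ∈ Set.Ici s) => hx)
  exact this

lemma aux_aesm {E : Type*} [NormedAddCommGroup E] [NormedSpace ℂ E] (V : ℝ → ℝ → E →L[ℂ] E)
    (hc : ∀ v : E, ContinuousOn (fun q : ℝ × ℝ => V q.1 q.2 v) {q : ℝ × ℝ | q.2 ≤ q.1})
    (T : ℝ) {s : Set ℝ} (hs : MeasurableSet s) (hsub : s ⊆ Set.Iic T)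
    {h : ℝ → E} (hh : AEStronglyMeasurable h (volume.restrict s)) :
    AEStronglyMeasurable (fun x => V T x (h x)) (volume.restrict s) := by
  obtain ⟨g, hg_sm, hg_ae⟩ := hh
  have key : ∀ φ : SimpleFunc ℝ E,
      AEStronglyMeasurable (fun x => V T x (φ x)) (volume.restrict s) := by
    intro φ
    induction φ using SimpleFunc.induction with
    | const c ht =>
      rename_i t
      have : (fun x => V T x ((SimpleFunc.piecewise t ht (SimpleFunc.const ℝ c)
          (SimpleFunc.const ℝ 0)) x)) = t.indicator (fun x => V T x c) := by
        funext x
        by_cases hx : x ∈ t <;>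
          simp [SimpleFunc.piecewise_apply, hx, Set.indicator_of_mem, Set.indicator_of_notMem]
      rw [this]
      exact (((aux_contOn V hc T c).mono hsub).aestronglyMeasurable hs).indicator ht
    | add hd hφ hψ =>
      rename_i φ ψ
      have : (fun x => V T x ((φ + ψ) x))
          = fun x => V T x (φ x) + V T x (ψ x) := by
        funext x; simp [map_add]
      rw [this]
      exact hφ.add hψ
  have hlim : AEStronglyMeasurable (fun x => V T x (g x)) (volume.restrict s) := by
    refine aestronglyMeasurable_of_tendsto_ae atTop (fun k => key (hg_sm.approx k)) ?_
    exact ae_of_all _ fun x =>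
      ((V T x).continuous.tendsto (g x)).comp (hg_sm.tendsto_approx x)
  exact hlim.congr (hg_ae.symm.mono fun x hx => show V T x (g x) = V T x (h x) by rw [hx])

lemma aux_transl {E : Type*} [NormedAddCommGroup E] [NormedSpace ℂ E] [CompleteSpace E] (F : ℝ → E) (a b : ℝ) :
    ∫ x in Set.Ico a b, F (x - 1) = ∫ x in Set.Ico (a - 1) (b - 1), F x := by
  rw [← integral_indicator measurableSet_Ico, ← integral_indicator measurableSet_Ico]
  have h : ∀ x : ℝ, (Set.Ico a b).indicator (fun x => F (x - 1)) x
      = (Set.Ico (a - 1) (b - 1)).indicator F (x - 1) := by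
    intro x
    by_cases hx : x ∈ Set.Ico a b
    · rw [Set.indicator_of_mem hx, Set.indicator_of_mem]
      exact ⟨by simp at hx ⊢; linarith [hx.1], by simp at hx ⊢; linarith [hx.2]⟩
    · rw [Set.indicator_of_notMem hx, Set.indicator_of_notMem]
      intro hc
      exact hx ⟨by simp at hc ⊢; linarith [hc.1], by simp at hc ⊢; linarith [hc.2]⟩
  simp_rw [h]
  exact integral_sub_right_eq_self (fun x => (Set.Ico (a - 1) (b - 1)).indicator F x) 1


/-- Let `{U(x,s)}_{x≥s}` be an evolutionary family on `E`,
`a(x) = U(x,x-1)`, `1 ≤ p < ∞`. If `b = I - aR`, `(bf)(x) = f(x) - U(x,x-1) f(x-1)`,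
is invertible on `L_p(ℝ;E)`, then `I - π₀(a)S : (v_n) ↦ (v_n - U(n,n-1) v_{n-1})`
maps `l_p(ℤ;E)` onto `l_p(ℤ;E)`. -/
theorem statement17
    {E : Type*} [NormedAddCommGroup E] [NormedSpace ℂ E] [CompleteSpace E]
    (U : ℝ → ℝ → E →L[ℂ] E) (hU : IsEvolutionFamily U)
    (p : ℝ≥0∞) [Fact (1 ≤ p)] (hp : p ≠ ∞)
    (AR : Lp E p (volume : Measure ℝ) →L[ℂ] Lp E p (volume : Measure ℝ))
    (hAR : ∀ f : Lp E p (volume : Measure ℝ),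
      ∀ᵐ x ∂(volume : Measure ℝ), (AR f) x = U x (x - 1) (f (x - 1)))
    (hb : IsUnit ((1 : Lp E p (volume : Measure ℝ) →L[ℂ] Lp E p (volume : Measure ℝ))
      - AR))
    (W : lp (fun _ : ℤ => E) p →L[ℂ] lp (fun _ : ℤ => E) p)
    (hW : ∀ (v : lp (fun _ : ℤ => E) p) (n : ℤ),
      (W v) n = U (n : ℝ) ((n : ℝ) - 1) (v (n - 1))) :
    Function.Surjective ⇑((1 : lp (fun _ : ℤ => E) p →L[ℂ] lp (fun _ : ℤ => E) p) - W) := by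
  classical
  obtain ⟨hcont, hcomp, hid, C, β, hC, hβ, hbnd⟩ := hU
  have hp1 : (1 : ℝ≥0∞) ≤ p := Fact.out
  have hp0 : p ≠ 0 := fun h => by simp [h] at hp1
  have hpr1 : 1 ≤ p.toReal := by
    rw [← ENNReal.toReal_one]
    exact ENNReal.toReal_mono hp hp1
  have hpr0 : 0 < p.toReal := lt_of_lt_of_le one_pos hpr1
  set pr := p.toReal with hprdef
  set K := C * Real.exp β with hKdef
  have hK0 : 0 < K := mul_pos hC (Real.exp_pos β)
  have hop : ∀ T x : ℝ, T - 1 ≤ x → x ≤ T → ‖U T x‖ ≤ K := by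
    intro T x h1 h2
    refine (hbnd T x h2).trans ?_
    have h3 : Real.exp (β * (T - x)) ≤ Real.exp β := by
      apply Real.exp_le_exp.2; nlinarith
    nlinarith [Real.exp_pos (β * (T - x))]
  intro wlp
  -- the function f
  set fFun : ℝ → E := fun x => U x ((⌊x⌋ : ℤ) : ℝ) (wlp ⌊x⌋) with hfFun
  -- summability of w
  have hwsum : Summable fun n : ℤ => ‖wlp n‖ ^ pr := (memℓp_gen_iff hpr0).mp (lp.memℓp wlp)
  -- basic partition facts
  have hUnion : (⋃ n : ℤ, Set.Ico ((n : ℝ)) ((n : ℝ) + 1)) = Set.univ :=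
    iUnion_Ico_intCast ℝ
  have hDisj : Pairwise (Function.onFun Disjoint fun n : ℤ => Set.Ico ((n : ℝ)) ((n : ℝ) + 1)) :=
    Set.pairwise_disjoint_Ico_intCast ℝ
  have hfloor : ∀ (n : ℤ) (x : ℝ), x ∈ Set.Ico ((n : ℝ)) ((n : ℝ) + 1) → ⌊x⌋ = n := by
    intro n x hx
    exact Int.floor_eq_iff.2 ⟨hx.1, by exact_mod_cast hx.2⟩
  -- measurability of fFun
  have hfm : AEStronglyMeasurable fFun volume := by
    rw [← Measure.restrict_univ (μ := volume), ← hUnion,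
      Measure.restrict_iUnion hDisj fun n => measurableSet_Ico,
      aestronglyMeasurable_sum_measure_iff]
    intro n
    have hcn : ContinuousOn (fun x => U x ((n : ℝ)) (wlp n)) (Set.Ici ((n : ℝ))) :=
      aux_contOn' U hcont _ _
    refine (((hcn.mono Set.Ico_subset_Ici_self).aestronglyMeasurable
      measurableSet_Ico).congr ?_)
    filter_upwards [ae_restrict_mem measurableSet_Ico] with x hx
    have h := hfloor n x hx
    simp only [hfFun, h]
  -- norm bound for fFun on each piece
  have hfbd : ∀ (n : ℤ) (x : ℝ), x ∈ Set.Ico ((n : ℝ)) ((n : ℝ) + 1) →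
      ‖fFun x‖ ≤ K * ‖wlp n‖ := by
    intro n x hx
    have h := hfloor n x hx
    simp only [hfFun, h]
    calc ‖U x ((n : ℝ)) (wlp n)‖ ≤ ‖U x ((n : ℝ))‖ * ‖wlp n‖ := (U x _).le_opNorm _
      _ ≤ K * ‖wlp n‖ := by
          refine mul_le_mul_of_nonneg_right (hop x (n : ℝ) ?_ hx.1) (norm_nonneg _)
          linarith [hx.2]
  -- fFun is in L^p
  have hmemf : MemLp fFun p volume := by
    refine ⟨hfm, ?_⟩
    rw [eLpNorm_eq_lintegral_rpow_enorm_toReal hp0 hp]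
    simp only [enorm_eq_nnnorm]
    refine ENNReal.rpow_lt_top_of_nonneg (by positivity) ?_
    have hsplit : ∫⁻ x, (‖fFun x‖₊ : ℝ≥0∞) ^ pr ∂volume
        = ∑' n : ℤ, ∫⁻ x in Set.Ico ((n : ℝ)) ((n : ℝ) + 1), (‖fFun x‖₊ : ℝ≥0∞) ^ pr := by
      rw [← lintegral_iUnion (fun n => measurableSet_Ico) hDisj, hUnion, setLIntegral_univ]
    rw [hsplit]
    have hb1 : ∀ n : ℤ, (∫⁻ x in Set.Ico ((n : ℝ)) ((n : ℝ) + 1),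
        (‖fFun x‖₊ : ℝ≥0∞) ^ pr) ≤ ENNReal.ofReal ((K * ‖wlp n‖) ^ pr) := by
      intro n
      have : ∀ᵐ x ∂volume.restrict (Set.Ico ((n : ℝ)) ((n : ℝ) + 1)),
          (‖fFun x‖₊ : ℝ≥0∞) ^ pr ≤ ENNReal.ofReal ((K * ‖wlp n‖) ^ pr) := by
        filter_upwards [ae_restrict_mem measurableSet_Ico] with x hx
        rw [← enorm_eq_nnnorm, ← ofReal_norm,
          ← ENNReal.ofReal_rpow_of_nonneg (mul_nonneg hK0.le (norm_nonneg _)) hpr0.le]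
        exact ENNReal.rpow_le_rpow (ENNReal.ofReal_le_ofReal (hfbd n x hx)) hpr0.le
      calc (∫⁻ x in Set.Ico ((n : ℝ)) ((n : ℝ) + 1), (‖fFun x‖₊ : ℝ≥0∞) ^ pr)
          ≤ ∫⁻ _ in Set.Ico ((n : ℝ)) ((n : ℝ) + 1),
            ENNReal.ofReal ((K * ‖wlp n‖) ^ pr) := lintegral_mono_ae this
        _ = ENNReal.ofReal ((K * ‖wlp n‖) ^ pr) := by
            rw [setLIntegral_const, Real.volume_Ico]
            norm_num
    refine ne_of_lt (lt_of_le_of_lt (ENNReal.tsum_le_tsum hb1) ?_)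
    have hsum2 : Summable fun n : ℤ => (K * ‖wlp n‖) ^ pr := by
      have : ∀ n : ℤ, (K * ‖wlp n‖) ^ pr = K ^ pr * ‖wlp n‖ ^ pr := fun n =>
        Real.mul_rpow hK0.le (norm_nonneg _)
      simp_rw [this]
      exact hwsum.mul_left _
    rw [← ENNReal.ofReal_tsum_of_nonneg (fun n => by positivity) hsum2]
    exact ENNReal.ofReal_lt_top
  -- the Lp element f and its preimage g under (1 - AR)
  set fLp : Lp E p (volume : Measure ℝ) := hmemf.toLp fFun with hfLp
  set g : Lp E p (volume : Measure ℝ) := (↑hb.unit⁻¹ : Lp E p (volume : Measure ℝ) →L[ℂ] _) fLp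
    with hgdef
  have hinv : ((1 : Lp E p (volume : Measure ℝ) →L[ℂ] Lp E p (volume : Measure ℝ)) - AR) g
      = fLp := by
    have hmul : ((1 : Lp E p (volume : Measure ℝ) →L[ℂ] Lp E p (volume : Measure ℝ)) - AR)
        * (↑hb.unit⁻¹ : Lp E p (volume : Measure ℝ) →L[ℂ] _) = 1 := by
      have hmul' := hb.unit.mul_inv
      rw [hb.unit_spec] at hmul'
      exact hmul'
    rw [hgdef, ← ContinuousLinearMap.mul_apply, hmul, ContinuousLinearMap.one_apply]
  -- the fundamental a.e. identity
  have hE1 : ∀ᵐ x : ℝ ∂volume, (g : ℝ → E) x - U x (x - 1) ((g : ℝ → E) (x - 1)) = fFun x := by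
    have h3 : g - AR g = fLp := by
      rw [← hinv, ContinuousLinearMap.sub_apply, ContinuousLinearMap.one_apply]
    have h7 : ⇑(g - AR g) =ᵐ[volume] ⇑fLp := by rw [h3]
    filter_upwards [Lp.coeFn_sub g (AR g), hAR g, hmemf.coeFn_toLp, h7] with x h4x h5x h6x h7x
    rw [← h5x, ← h6x, ← h7x, h4x, Pi.sub_apply]
  -- integrability of x ↦ U T x (g x) on Ico (T-1) T
  have hgmem : MemLp (⇑g) p volume := Lp.memLp g
  have hInt : ∀ T : ℝ, IntegrableOn (fun x => U T x ((g : ℝ → E) x)) (Set.Ico (T-1) T)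
      volume := by
    intro T
    haveI : IsFiniteMeasure (volume.restrict (Set.Ico (T-1) T)) :=
      ⟨by rw [Measure.restrict_apply_univ]; exact measure_Ico_lt_top⟩
    have hg1 : Integrable (⇑g) (volume.restrict (Set.Ico (T-1) T)) :=
      memLp_one_iff_integrable.mp ((hgmem.restrict _).mono_exponent hp1)
    have haesm := aux_aesm U hcont T measurableSet_Ico
      (fun x hx => le_of_lt hx.2) hg1.aestronglyMeasurable
    refine (hg1.norm.const_mul K).mono' haesm ?_
    filter_upwards [ae_restrict_mem measurableSet_Ico] with x hx
    calc ‖U T x ((g : ℝ → E) x)‖ ≤ ‖U T x‖ * ‖(g : ℝ → E) x‖ := (U T x).le_opNorm _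
      _ ≤ K * ‖(g : ℝ → E) x‖ :=
          mul_le_mul_of_nonneg_right (hop T x hx.1 hx.2.le) (norm_nonneg _)
  have hgL1 : ∀ a b : ℝ, Integrable (⇑g) (volume.restrict (Set.Ico a b)) := by
    intro a b
    haveI : IsFiniteMeasure (volume.restrict (Set.Ico a b)) :=
      ⟨by rw [Measure.restrict_apply_univ]; exact measure_Ico_lt_top⟩
    exact memLp_one_iff_integrable.mp ((hgmem.restrict _).mono_exponent hp1)
  -- the sequence of integrals J
  set J : ℤ → E := fun n => ∫ x in Set.Ico ((n : ℝ)) ((n : ℝ) + 1),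
    U ((n : ℝ) + 1) x ((g : ℝ → E) x) with hJdef
  have hJeq : ∀ m : ℤ, J (m - 1) = ∫ x in Set.Ico ((m : ℝ) - 1) (m : ℝ),
      U (m : ℝ) x ((g : ℝ → E) x) := by
    intro m
    have h1 : ((m - 1 : ℤ) : ℝ) = (m : ℝ) - 1 := by push_cast; ring
    have h2 : (m : ℝ) - 1 + 1 = (m : ℝ) := by ring
    simp only [hJdef, h1, h2]
  -- the key telescoping identity
  have hKEY : ∀ m : ℤ,
      J (m - 1) = U ((m : ℝ)) ((m : ℝ) - 1) (J (m - 2))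
        + U ((m : ℝ)) ((m : ℝ) - 1) (wlp (m - 1)) := by
    intro m
    set T : ℝ := (m : ℝ) with hT
    set S : Set ℝ := Set.Ico (T - 1) T with hS
    set c : E := U T (T - 1) (wlp (m - 1)) with hcdef
    have hae : ∀ᵐ x ∂volume.restrict S,
        U T x ((g : ℝ → E) x) = U T (x - 1) ((g : ℝ → E) (x - 1)) + c := by
      filter_upwards [ae_restrict_of_ae hE1, ae_restrict_mem measurableSet_Ico]
        with x hx1 hx2
      have hxT : x < T := hx2.2
      have hxT1 : T - 1 ≤ x := hx2.1
      have hfl : ⌊x⌋ = m - 1 := by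
        apply Int.floor_eq_iff.2
        constructor
        · push_cast; simp only [hT] at hxT1 ⊢; linarith
        · push_cast; simp only [hT] at hxT ⊢; linarith
      have hfx : fFun x = U x (T - 1) (wlp (m - 1)) := by
        simp only [hfFun, hfl]
        norm_num
        rfl
      have happ := congrArg (U T x) hx1
      rw [map_sub, hfx] at happ
      have hc1 : U T x (U x (x - 1) ((g : ℝ → E) (x - 1)))
          = U T (x - 1) ((g : ℝ → E) (x - 1)) := by
        rw [hcomp T x (x - 1) (by linarith) hxT.le]; rfl
      have hc2 : U T x (U x (T - 1) ((wlp : ∀ _ : ℤ, E) (m - 1))) = c := by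
        rw [hcdef, hcomp T x (T - 1) hxT1 hxT.le]; rfl
      rw [hc1, hc2] at happ
      have := sub_eq_iff_eq_add.mp happ
      rw [this, add_comm]
    have hA : IntegrableOn (fun x => U T x ((g : ℝ → E) x)) S volume := hInt T
    have hconst : IntegrableOn (fun _ : ℝ => c) S volume :=
      integrableOn_const measure_Ico_lt_top.ne
    have hB : IntegrableOn (fun x => U T (x - 1) ((g : ℝ → E) (x - 1))) S volume := by
      refine (hA.sub hconst).congr ?_
      filter_upwards [hae] with x hx
      simp only [Pi.sub_apply]
      rw [hx]; abel
    have hint : ∫ x in S, U T x ((g : ℝ → E) x)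
        = (∫ x in S, U T (x - 1) ((g : ℝ → E) (x - 1))) + c := by
      rw [integral_congr_ae hae, integral_add hB hconst, setIntegral_const,
        hS, Real.volume_real_Ico, show T - (T - 1) = 1 by ring]
      simp
    have htr : ∫ x in S, U T (x - 1) ((g : ℝ → E) (x - 1))
        = U T (T - 1) (J (m - 2)) := by
      have h1 := aux_transl (fun y => U T y ((g : ℝ → E) y)) (T - 1) T
      rw [hS, h1]
      have h2 : ∀ y ∈ Set.Ico (T - 1 - 1) (T - 1),
          U T y ((g : ℝ → E) y) = U T (T - 1) (U (T - 1) y ((g : ℝ → E) y)) := by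
        intro y hy
        rw [hcomp T (T - 1) y hy.2.le (by linarith)]; rfl
      rw [setIntegral_congr_fun measurableSet_Ico h2,
        ContinuousLinearMap.integral_comp_comm _ (hInt (T - 1))]
      congr 1
      have h3 : ((m - 2 : ℤ) : ℝ) = T - 1 - 1 := by push_cast; simp only [hT]; ring
      have h5 : (T - 1 - 1) + 1 = T - 1 := by ring
      simp only [hJdef, h3, h5]
    rw [hJeq m, hint, htr, hcdef]
  -- summability of the J sequence
  have hLtot : ∫⁻ x, (‖(g : ℝ → E) x‖₊ : ℝ≥0∞) ^ pr ∂volume < ⊤ := by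
    have h1 := (Lp.memLp g).2
    rw [eLpNorm_eq_lintegral_rpow_enorm_toReal hp0 hp] at h1
    exact (ENNReal.rpow_lt_top_iff_of_pos (by positivity)).mp h1
  have hsplit : ∑' n : ℤ, ∫⁻ x in Set.Ico ((n : ℝ)) ((n : ℝ) + 1),
      (‖(g : ℝ → E) x‖₊ : ℝ≥0∞) ^ pr = ∫⁻ x, (‖(g : ℝ → E) x‖₊ : ℝ≥0∞) ^ pr ∂volume := by
    rw [← lintegral_iUnion (fun n => measurableSet_Ico) hDisj, hUnion, setLIntegral_univ]
  set L : ℤ → ℝ≥0∞ := fun n => ∫⁻ x in Set.Ico ((n : ℝ)) ((n : ℝ) + 1),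
    (‖(g : ℝ → E) x‖₊ : ℝ≥0∞) ^ pr with hLdef
  have hLne : ∀ n : ℤ, L n ≠ ⊤ := by
    intro n
    refine ne_of_lt (lt_of_le_of_lt ?_ hLtot)
    exact lintegral_mono' Measure.restrict_le_self le_rfl
  set D : ℤ → ℝ := fun n => ∫ x in Set.Ico ((n : ℝ)) ((n : ℝ) + 1), ‖(g : ℝ → E) x‖
    with hDdef
  have hD0 : ∀ n : ℤ, 0 ≤ D n := fun n => integral_nonneg fun x => norm_nonneg _
  have hJbd : ∀ n : ℤ, ‖J n‖ ≤ K * D n := by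
    intro n
    have hAn : IntegrableOn (fun x => U ((n : ℝ) + 1) x ((g : ℝ → E) x))
        (Set.Ico ((n : ℝ)) ((n : ℝ) + 1)) volume := by
      have := hInt ((n : ℝ) + 1)
      rwa [show (n : ℝ) + 1 - 1 = (n : ℝ) by ring] at this
    calc ‖J n‖ ≤ ∫ x in Set.Ico ((n : ℝ)) ((n : ℝ) + 1),
          ‖U ((n : ℝ) + 1) x ((g : ℝ → E) x)‖ := norm_integral_le_integral_norm _
      _ ≤ ∫ x in Set.Ico ((n : ℝ)) ((n : ℝ) + 1), K * ‖(g : ℝ → E) x‖ := by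
          refine setIntegral_mono_on hAn.norm ((hgL1 _ _).norm.const_mul K)
            measurableSet_Ico ?_
          intro x hx
          calc ‖U ((n : ℝ) + 1) x ((g : ℝ → E) x)‖
              ≤ ‖U ((n : ℝ) + 1) x‖ * ‖(g : ℝ → E) x‖ := (U _ x).le_opNorm _
            _ ≤ K * ‖(g : ℝ → E) x‖ := by
                refine mul_le_mul_of_nonneg_right (hop ((n : ℝ) + 1) x ?_ hx.2.le)
                  (norm_nonneg _)
                linarith [hx.1]
      _ = K * D n := by rw [integral_const_mul]
  have hDL : ∀ n : ℤ, D n ^ pr ≤ (L n).toReal := by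
    intro n
    haveI : IsProbabilityMeasure (volume.restrict (Set.Ico ((n : ℝ)) ((n : ℝ) + 1))) := by
      constructor
      rw [Measure.restrict_apply_univ, Real.volume_Ico]
      norm_num
    have hg1 := hgL1 ((n : ℝ)) ((n : ℝ) + 1)
    have h1 : ENNReal.ofReal (D n)
        = ∫⁻ x, (‖(g : ℝ → E) x‖₊ : ℝ≥0∞)
          ∂(volume.restrict (Set.Ico ((n : ℝ)) ((n : ℝ) + 1))) :=
      ofReal_integral_norm_eq_lintegral_enorm hg1
    have h3 : eLpNorm (⇑g) 1 (volume.restrict (Set.Ico ((n : ℝ)) ((n : ℝ) + 1)))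
        ≤ eLpNorm (⇑g) p (volume.restrict (Set.Ico ((n : ℝ)) ((n : ℝ) + 1))) :=
      eLpNorm_le_eLpNorm_of_exponent_le hp1 (Lp.aestronglyMeasurable g).restrict
    have h4 : (eLpNorm (⇑g) p (volume.restrict (Set.Ico ((n : ℝ)) ((n : ℝ) + 1)))) ^ pr
        = L n := by
      rw [eLpNorm_eq_lintegral_rpow_enorm_toReal hp0 hp, ← ENNReal.rpow_mul, one_div,
        inv_mul_cancel₀ (ne_of_gt hpr0), ENNReal.rpow_one]
      rfl
    have h5 : ENNReal.ofReal (D n ^ pr) ≤ L n := by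
      rw [← ENNReal.ofReal_rpow_of_nonneg (hD0 n) hpr0.le, h1]
      simp only [← enorm_eq_nnnorm]
      rw [← eLpNorm_one_eq_lintegral_enorm, ← h4]
      exact ENNReal.rpow_le_rpow h3 hpr0.le
    exact (ENNReal.ofReal_le_iff_le_toReal (hLne n)).mp h5
  have hsumL : Summable fun n : ℤ => (L n).toReal := by
    refine ENNReal.summable_toReal ?_
    rw [hsplit]
    exact hLtot.ne
  have hJs : Summable fun n : ℤ => ‖J n‖ ^ pr := by
    refine Summable.of_nonneg_of_le (fun n => by positivity)
      (fun n => ?_) (hsumL.mul_left (K ^ pr))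
    calc ‖J n‖ ^ pr ≤ (K * D n) ^ pr :=
          Real.rpow_le_rpow (norm_nonneg _) (hJbd n) hpr0.le
      _ = K ^ pr * D n ^ pr := Real.mul_rpow hK0.le (hD0 n)
      _ ≤ K ^ pr * (L n).toReal :=
          mul_le_mul_of_nonneg_left (hDL n) (by positivity)
  have hmemJ : Memℓp (fun m : ℤ => J (m - 1)) p := by
    apply memℓp_gen
    exact ((Equiv.subRight (1 : ℤ)).summable_iff
      (f := fun n : ℤ => ‖J n‖ ^ pr)).mpr hJs
  -- the solution
  set jlp : lp (fun _ : ℤ => E) p := ⟨fun m : ℤ => J (m - 1), hmemJ⟩ with hjlp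
  refine ⟨wlp + jlp, ?_⟩
  apply lp.ext
  funext n
  have h1 : ((1 : lp (fun _ : ℤ => E) p →L[ℂ] lp (fun _ : ℤ => E) p) - W) (wlp + jlp)
      = (wlp + jlp) - W (wlp + jlp) := by
    rw [ContinuousLinearMap.sub_apply, ContinuousLinearMap.one_apply]
  rw [h1, lp.coeFn_sub, Pi.sub_apply, hW (wlp + jlp) n, lp.coeFn_add, Pi.add_apply,
    Pi.add_apply]
  have hco : (jlp : ∀ _ : ℤ, E) = fun m : ℤ => J (m - 1) := rfl
  rw [hco]
  have h2 : n - 1 - 1 = n - 2 := by ring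
  simp only [h2]
  rw [map_add, hKEY n]
  abel
end
end
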